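/- arXiv:1910.11796 — 6 statements merged into one kernel-verified Lean document; each statement's English description precedes it below -/
import Mathlib

section
/- Fix i ∈ {1,…,d}, n ∈ ℕ and an (n,i)-layer 𝓛. Let x, y ∈ ℝ^d and assume that (a) the line segment L(x,y) passes through 𝓛, and (b) for every j ≠ i there exist (n,j)-layers 𝓛_j^1 and 𝓛_j^2 with L(x,y) ⊂ 𝓛_j^1 ∪ 𝓛_j^2. Let ℓ be the line containing L(x,y). Then there exists a cube Q ∈ 𝒬_n with Q ⊂ 𝓛 such that: (i) ℓ intersects Q very properly in direction i; (ii) ℓ intersects Q properly and ℓ ∩ Q = L(x,y) ∩ Q; (iii) Q is a neighbour of every cube in 𝒬_n contained in 𝓛 that L(x,y) intersects in a set of positive length. -/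
open MeasureTheory Set
open scoped ENNReal NNReal

noncomputable section

namespace FracPerc

/-- Euclidean space `ℝ^d`. -/
abbrev Euc (d : ℕ) := EuclideanSpace ℝ (Fin d)

/-- View a coordinate function as a point of `ℝ^d`. -/
def ptOf (d : ℕ) (f : Fin d → ℝ) : Euc d := WithLp.toLp 2 f

/-- The set of vertices of the `N^d`-branching tree: finite words over `Fin (N^d)`. -/
abbrev Word (d N : ℕ) : Type := Σ n : ℕ, Fin n → Fin (N ^ d)

/-- The sample space `Ω` of fractal percolation. -/
abbrev Omega (d N : ℕ) : Type := Word d N → Bool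

/-- The Bernoulli measure `(1-p)·δ_false + p·δ_true` on `Bool`. -/
def bernoulliMeasure (p : ℝ) : Measure Bool :=
  ENNReal.ofReal (1 - p) • Measure.dirac false + ENNReal.ofReal p • Measure.dirac true

/-- `P` is the percolation measure `ℙ_p = ((1-p)δ_0 + pδ_1)^{V}` on `Ω = {0,1}^V`:
it is the unique probability measure under which the coordinates are independent and
Bernoulli(`p`)-distributed. -/
def IsPercMeasure (d N : ℕ) (p : ℝ) (P : Measure (Omega d N)) : Prop :=
  IsProbabilityMeasure P ∧
    ProbabilityTheory.iIndepFun
      (fun w : Word d N => fun ω : Omega d N => ω w) P ∧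
    ∀ w : Word d N, P.map (fun ω : Omega d N => ω w) = bernoulliMeasure p

/-- The natural base-`N` coding bijection between words of length `n` and grid positions. -/
def coding (d N n : ℕ) : (Fin n → Fin (N ^ d)) ≃ (Fin d → Fin (N ^ n)) :=
  (Equiv.arrowCongr (Equiv.refl (Fin n)) finFunctionFinEquiv.symm).trans
    ((Equiv.piComm fun (_ : Fin n) (_ : Fin d) => Fin N).trans
      (Equiv.arrowCongr (Equiv.refl (Fin d)) finFunctionFinEquiv))

/-- The grid cube of level `n` at position `l`, an element of `𝒬_n`. -/
def gridCube (d N n : ℕ) (l : Fin d → Fin (N ^ n)) : Set (Euc d) :=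
  {x | ∀ i, (l i : ℝ) / (N : ℝ) ^ n ≤ x i ∧ x i ≤ ((l i : ℝ) + 1) / (N : ℝ) ^ n}

/-- The cube of level `n` at position `l` is chosen in the realisation `ω`. -/
def chosen (d N : ℕ) (ω : Omega d N) (n : ℕ) (l : Fin d → Fin (N ^ n)) : Prop :=
  ω ⟨n, (coding d N n).symm l⟩ = true

/-- The fractal percolation set `E(ω)`. -/
def percSet (d N : ℕ) (ω : Omega d N) : Set (Euc d) :=
  ⋂ n : ℕ, ⋃ l : Fin d → Fin (N ^ n), ⋃ _ : chosen d N ω n l, gridCube d N n l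

/-! ### Geometry -/

/-- The orthogonal projection onto the `i`-th coordinate axis. -/
def proj (d : ℕ) (i : Fin d) : Euc d → ℝ := fun x => x i

/-- The line through `x` with direction `v`. -/
def lineThrough (d : ℕ) (x v : Euc d) : Set (Euc d) := {y | ∃ t : ℝ, y = x + t • v}

/-- `ℓ` is a line in `ℝ^d`. -/
def IsLine (d : ℕ) (ℓ : Set (Euc d)) : Prop := ∃ x v, v ≠ 0 ∧ ℓ = lineThrough d x v

/-- Two parallel lines. -/
def Parallel (d : ℕ) (ℓ ℓ' : Set (Euc d)) : Prop :=
  ∃ x x' v, v ≠ 0 ∧ ℓ = lineThrough d x v ∧ ℓ' = lineThrough d x' v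

/-- `i` is a principle direction of the line `ℓ`: it maximises the length of the
projections of subsegments of `ℓ`. -/
def PrincipleDir (d : ℕ) (i : Fin d) (ℓ : Set (Euc d)) : Prop :=
  ∀ x ∈ ℓ, ∀ y ∈ ℓ, ∀ j : Fin d, |y j - x j| ≤ |y i - x i|

/-- `ℓ` intersects the set `A` properly at level `n`, in direction `i`:
`H¹(Π_i(ℓ ∩ A)) ≥ d⁻¹ N⁻ⁿ`. -/
def ProperlyIn (d N : ℕ) (i : Fin d) (ℓ A : Set (Euc d)) (n : ℕ) : Prop :=
  ENNReal.ofReal ((d : ℝ)⁻¹ * ((N : ℝ) ^ n)⁻¹) ≤ μH[1] (proj d i '' (ℓ ∩ A))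

/-- `ℓ` intersects the set `A` properly at level `n`. -/
def Properly (d N : ℕ) (ℓ A : Set (Euc d)) (n : ℕ) : Prop :=
  ∃ i, PrincipleDir d i ℓ ∧ ProperlyIn d N i ℓ A n

/-- `ℓ` intersects `A` very properly in direction `i` at level `n`:
`Π_i(ℓ ∩ A)` contains an interval `[k d⁻¹N⁻ⁿ, (k+1) d⁻¹N⁻ⁿ]` with `k ∈ ℤ`. -/
def VeryProperly (d N : ℕ) (i : Fin d) (ℓ A : Set (Euc d)) (n : ℕ) : Prop :=
  ∃ k : ℤ, Icc ((k : ℝ) * ((d : ℝ)⁻¹ * ((N : ℝ) ^ n)⁻¹))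
      (((k : ℝ) + 1) * ((d : ℝ)⁻¹ * ((N : ℝ) ^ n)⁻¹)) ⊆ proj d i '' (ℓ ∩ A)

/-- The `(n,i)`-layer `Π_i⁻¹([k N⁻ⁿ, (k+1) N⁻ⁿ])`. -/
def nLayer (d N n : ℕ) (i : Fin d) (k : ℕ) : Set (Euc d) :=
  {x | x i ∈ Icc ((k : ℝ) / (N : ℝ) ^ n) (((k : ℝ) + 1) / (N : ℝ) ^ n)}

/-- The points `x` and `y` lie in different connected components of the complement of the
interior of `L`; this is what it means for a curve (or segment) with endpoints `x`, `y` to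
pass through the layer `L`. -/
def PassesThroughPts (d : ℕ) (x y : Euc d) (L : Set (Euc d)) : Prop :=
  x ∈ (interior L)ᶜ ∧ y ∈ (interior L)ᶜ ∧
    connectedComponentIn (interior L)ᶜ x ≠ connectedComponentIn (interior L)ᶜ y

/-- The segment `L(x,y)` passes through the layer `L`. -/
def SegPassesThrough (d : ℕ) (x y : Euc d) (L : Set (Euc d)) : Prop :=
  PassesThroughPts d x y L

/-- The level-`m` cubes at positions `l`, `l'` are `i`-neighbours: they intersect and lie in
a common `(m,i)`-layer. -/
def INeighbour (d N m : ℕ) (i : Fin d) (l l' : Fin d → Fin (N ^ m)) : Prop :=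
  (gridCube d N m l ∩ gridCube d N m l').Nonempty ∧
    ∃ k : ℕ, gridCube d N m l ⊆ nLayer d N m i k ∧ gridCube d N m l' ⊆ nLayer d N m i k

/-- The level-`m` cube at position `l` is strongly `i`-deleted: no `i`-neighbour of it
(including itself) is chosen. -/
def StronglyIDeleted (d N : ℕ) (ω : Omega d N) (m : ℕ) (i : Fin d)
    (l : Fin d → Fin (N ^ m)) : Prop :=
  ∀ l', INeighbour d N m i l l' → ¬ chosen d N ω m l'

/-- Indices of `(m,i)`-layers meeting `A` in a set of positive length. -/
def posLayers (d N m : ℕ) (i : Fin d) (A : Set (Euc d)) : Set ℕ :=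
  {k | 0 < μH[1] (A ∩ nLayer d N m i k)}

/-- `k'` indexes one of the first two or last two `(m,i)`-layers (in the natural order)
meeting `A` in positive length. -/
def EdgeLayer (d N m : ℕ) (i : Fin d) (A : Set (Euc d)) (k' : ℕ) : Prop :=
  k' ∈ posLayers d N m i A ∧
    (({k ∈ posLayers d N m i A | k < k'}).ncard ≤ 1 ∨
      ({k ∈ posLayers d N m i A | k' < k}).ncard ≤ 1)

/-- The region `A` (a cube of level `n`) is `m₀`-good for the line `ℓ` with principle
direction `i`: there is a strongly `i`-deleted level-`(n+m₀)` cube inside `A`, not contained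
in the first two or last two `(n+m₀,i)`-layers meeting `ℓ ∩ A` in positive length,
which `ℓ` intersects properly. -/
def M0GoodForDir (d N : ℕ) (ω : Omega d N) (n m0 : ℕ) (i : Fin d) (ℓ A : Set (Euc d)) : Prop :=
  ∃ l' : Fin d → Fin (N ^ (n + m0)),
    gridCube d N (n + m0) l' ⊆ A ∧
    StronglyIDeleted d N ω (n + m0) i l' ∧
    (∀ k', EdgeLayer d N (n + m0) i (ℓ ∩ A) k' →
      ¬ gridCube d N (n + m0) l' ⊆ nLayer d N (n + m0) i k') ∧
    Properly d N ℓ (gridCube d N (n + m0) l') (n + m0)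

/-- The family `Γ(Q,m₀)` of lines through a vertex `v` of the cube `Q` (with corner `corner`
and side length `side`) and a grid point of spacing `side/N^{m₀}` of a `(d-1)`-face `F` of `Q`
not containing `v`. -/
def cubeGamma (d N : ℕ) (corner : Fin d → ℝ) (side : ℝ) (m0 : ℕ) : Set (Set (Euc d)) :=
  {ℓ | ∃ (i : Fin d) (ε : Bool) (vs : Fin d → Bool) (g : Fin d → ℝ),
    vs i = !ε ∧
    g i = corner i + (if ε then side else 0) ∧
    (∀ j, j ≠ i → ∃ z : ℕ, z ≤ N ^ m0 ∧ g j = corner j + (z : ℝ) * side / (N : ℝ) ^ m0) ∧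
    ℓ = lineThrough d (ptOf d fun j => corner j + (if vs j then side else 0))
      (ptOf d g - ptOf d fun j => corner j + (if vs j then side else 0))}

/-- The region `A` (a possibly shrunk/shifted cube of level `n` with corner `corner`) is
`m₀`-good: it is `m₀`-good for every line which intersects `A` properly and is parallel to
some line of `Γ(Q,m₀)`. -/
def M0GoodA (d N : ℕ) (ω : Omega d N) (n m0 : ℕ) (corner : Fin d → ℝ) (A : Set (Euc d)) :
    Prop :=
  ∀ (ℓ : Set (Euc d)) (i : Fin d), IsLine d ℓ →
    (∃ ℓ' ∈ cubeGamma d N corner (((N : ℝ) ^ n)⁻¹) m0, Parallel d ℓ ℓ') →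
    PrincipleDir d i ℓ → ProperlyIn d N i ℓ A n →
    M0GoodForDir d N ω n m0 i ℓ A

/-- The level-`n` cube at position `l` is `m₀`-good. -/
def M0Good (d N : ℕ) (ω : Omega d N) (n m0 : ℕ) (l : Fin d → Fin (N ^ n)) : Prop :=
  M0GoodA d N ω n m0 (fun j => (l j : ℝ) / (N : ℝ) ^ n) (gridCube d N n l)

/-- The cube `K_Q`: concentric with `Q`, five times the side length. -/
def KCube (d N n : ℕ) (l : Fin d → Fin (N ^ n)) : Set (Euc d) :=
  {x | ∀ i, ((l i : ℝ) - 2) / (N : ℝ) ^ n ≤ x i ∧ x i ≤ ((l i : ℝ) + 3) / (N : ℝ) ^ n}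

/-! ### Shifted grids -/

/-- The set `S = {-1,1}^d ∪ {0}` of shift directions. -/
def Shifts (d : ℕ) : Set (Fin d → ℤ) := {s | ∀ i, s i = 1 ∨ s i = -1} ∪ {0}

/-- The translation vector `Σ_i s_i N^{-(n+n'+m₀)} e_i`. -/
def shiftVec (d N n nn m0 : ℕ) (s : Fin d → ℤ) : Fin d → ℝ :=
  fun i => (s i : ℝ) * ((N : ℝ) ^ (n + nn + m0))⁻¹

/-- A level-`n` grid cube translated by the vector `t`: an element of a shifted grid. -/
def shiftCube (d N n : ℕ) (t : Fin d → ℝ) (l : Fin d → Fin (N ^ n)) : Set (Euc d) :=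
  {x | ∀ i, (l i : ℝ) / (N : ℝ) ^ n + t i ≤ x i ∧ x i ≤ ((l i : ℝ) + 1) / (N : ℝ) ^ n + t i}

/-- The concentric cube `int_{m₀} Q = (1 - 2N^{-m₀})Q` of a (shifted) level-`n` cube. -/
def intCube (d N n m0 : ℕ) (t : Fin d → ℝ) (l : Fin d → Fin (N ^ n)) : Set (Euc d) :=
  {x | ∀ i, (l i : ℝ) / (N : ℝ) ^ n + t i + ((N : ℝ) ^ (n + m0))⁻¹ ≤ x i ∧
    x i ≤ ((l i : ℝ) + 1) / (N : ℝ) ^ n + t i - ((N : ℝ) ^ (n + m0))⁻¹}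

/-- The (shifted) level-`n` cube at position `l`, translated by `t`, is independently
`m₀`-good. -/
def IndepM0Good (d N : ℕ) (ω : Omega d N) (n m0 : ℕ) (t : Fin d → ℝ)
    (l : Fin d → Fin (N ^ n)) : Prop :=
  M0GoodA d N ω n m0 (fun j => (l j : ℝ) / (N : ℝ) ^ n + t j) (intCube d N n m0 t l)

/-! ### Iterated goodness along a sequence of levels -/

/-- `GoodL d N ω c m0 k L n l` says that the level-`n` cube at position `l` is
`(k, L, c, m₀)`-good, for a strictly decreasing sequence `L` of levels with `L k = 0`. -/
def GoodL (d N : ℕ) (ω : Omega d N) (c m0 : ℕ) :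
    (k : ℕ) → (L : ℕ → ℕ) → (n : ℕ) → (Fin d → Fin (N ^ n)) → Prop
  | 0, _, n, l => M0Good d N ω n m0 l
  | k + 1, L, n, l =>
      ({l' : Fin d → Fin (N ^ (n + L k)) |
        gridCube d N (n + L k) l' ⊆ gridCube d N n l ∧
          ¬ GoodL d N ω c m0 k (fun j => L j - L k) (n + L k) l'}).ncard ≤ c

/-- Independently `(k, L, c, m₀)`-good cubes of the shifted grids (the shift vector `t`
is the common absolute translation of the nested shifted grids). -/
def IndepGoodL (d N : ℕ) (ω : Omega d N) (c m0 : ℕ) :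
    (k : ℕ) → (L : ℕ → ℕ) → (n : ℕ) → (t : Fin d → ℝ) → (Fin d → Fin (N ^ n)) → Prop
  | 0, _, n, t, l => IndepM0Good d N ω n m0 t l
  | k + 1, L, n, t, l =>
      ({l' : Fin d → Fin (N ^ (n + L k)) |
        shiftCube d N (n + L k) t l' ⊆ shiftCube d N n t l ∧
          ¬ IndepGoodL d N ω c m0 k (fun j => L j - L k) (n + L k) t l'}).ncard ≤ c

/-! ### Curves, Hölder conditions, tightness, gaps -/

/-- The maximum metric `d_∞` on `ℝ^d`. -/
def dmax (d : ℕ) (x y : Euc d) : ℝ := ⨆ i, |x i - y i|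

/-- The `d_∞`-distance from a point to a set. -/
def dmaxSet (d : ℕ) (x : Euc d) (A : Set (Euc d)) : ℝ := sInf (dmax d x '' A)

/-- `γ` (as a curve on `I`) is `(α,η,R)`-tight at `t`. -/
def TightAt (d : ℕ) (γ : ℝ → Euc d) (I : Set ℝ) (α η R t : ℝ) : Prop :=
  ∀ r : ℝ, 0 < r → r ≤ R → η * (2 * r) ^ α ≤ Metric.diam (γ '' (Icc (t - r) (t + r) ∩ I))

/-- `γ` has an `ε`-gap of scale `r` at `t` (with respect to `ω`). -/
def GapAtScale (d N : ℕ) (ω : Omega d N) (γ : ℝ → Euc d) (I : Set ℝ) (ε t r : ℝ) : Prop :=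
  ∃ ta tb : ℝ, ta ∈ Icc (t - r) (t + r) ∩ I ∧ tb ∈ Icc (t - r) (t + r) ∩ I ∧ ta < tb ∧
    (∀ u ∈ Ioo ta tb, γ u ∉ percSet d N ω) ∧
    ε * Metric.diam (γ '' (Icc (t - r) (t + r) ∩ I)) ≤ dist (γ ta) (γ tb)

end FracPerc

open FracPerc

/-!
Since `L(x,y)` passes through the layer, its endpoints lie on opposite sides of it, so the `i`-th
coordinate parametrises the part of the segment inside the layer. Cut `[k N⁻ⁿ, (k+1) N⁻ⁿ]` into
`d` pieces of length `d⁻¹ N⁻ⁿ`. For `j ≠ i` the segment lies in two adjacent `(n,j)`-layers, so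
its `j`-th coordinate crosses at most one grid value, inside at most one piece. With only `d - 1`
such directions some piece is crossed by none, and over it the segment stays in a single cube `Q`
of the layer: this piece gives (i), and since projecting onto a principle direction only
lengthens it, also the proper intersection; `ℓ ∩ Q` lies between the endpoints' `i`-th
coordinates, hence in the segment. A cube of the layer met by the segment in positive length
lies, in every direction `j ≠ i`, in the same two adjacent layers as `Q`, hence touches `Q`.
-/

namespace FracPerc

-- `gridCube d N n l` and `nLayer d N n i k` are, coordinatewise and definitionally,
-- `cell (N ^ n) (l j)` and `cell (N ^ n) k`.
def cell (a : ℝ) (p : ℕ) : Set ℝ := Icc (p / a) ((p + 1) / a)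

section Cells

variable {a : ℝ}

lemma mem_Icc_div_iff (ha : 0 < a) {p q : ℕ} {z : ℝ} :
    z ∈ Icc (p / a) ((q + 1) / a) ↔ (p : ℝ) ≤ a * z ∧ a * z ≤ q + 1 := by
  rw [mem_Icc, div_le_iff₀ ha, le_div_iff₀ ha, mul_comm z]

lemma mem_cell_iff (ha : 0 < a) {p : ℕ} {z : ℝ} :
    z ∈ cell a p ↔ (p : ℝ) ≤ a * z ∧ a * z ≤ p + 1 :=
  mem_Icc_div_iff ha

lemma cell_inter_nonempty (ha : 0 < a) {p q : ℕ} (hpq : p ≤ q + 1) (hqp : q ≤ p + 1) :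
    (cell a p ∩ cell a q).Nonempty := by
  refine ⟨(max p q : ℕ) / a, ?_, ?_⟩ <;>
  · rw [mem_cell_iff ha, mul_div_cancel₀ _ ha.ne']
    constructor <;> exact_mod_cast (by omega)

lemma exists_adjacent_cells_of_subset_union (ha : 0 < a) {u v : ℝ} {k₁ k₂ : ℕ}
    (h : uIcc u v ⊆ cell a k₁ ∪ cell a k₂) :
    ∃ p p' : ℕ, p ≤ p' ∧ p' ≤ p + 1 ∧ p' ≤ max k₁ k₂ ∧ uIcc u v ⊆ Icc (p / a) ((p' + 1) / a) := by
  wlog hk : k₁ ≤ k₂ generalizing k₁ k₂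
  · obtain ⟨p, p', h⟩ := this (union_comm (cell a k₁) _ ▸ h) (by omega)
    exact ⟨p, p', by rwa [max_comm]⟩
  have hdiv : ∀ {q q' : ℕ}, q ≤ q' → (q : ℝ) / a ≤ q' / a := fun h =>
    div_le_div_of_nonneg_right (by exact_mod_cast h) ha.le
  by_cases hadj : k₂ ≤ k₁ + 1
  · refine ⟨k₁, k₂, hk, hadj, le_max_right _ _, h.trans (union_subset ?_ ?_)⟩
    · exact Icc_subset_Icc le_rfl (by simpa using hdiv (Nat.succ_le_succ hk))
    · exact Icc_subset_Icc (hdiv hk) le_rfl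
  · have hdisj : uIcc u v ∩ (cell a k₁ ∩ cell a k₂) = ∅ := by
      refine eq_empty_of_forall_notMem fun z ⟨_, h₁, h₂⟩ => hadj ?_
      rw [mem_cell_iff ha] at h₁ h₂
      exact_mod_cast (by linarith [h₁.2, h₂.1] : (k₂ : ℝ) ≤ k₁ + 1)
    rcases isPreconnected_iff_subset_of_disjoint_closed.1 isPreconnected_uIcc _ _
      isClosed_Icc isClosed_Icc h hdisj with h₁ | h₂
    · exact ⟨k₁, k₁, le_rfl, by omega, le_max_left _ _, h₁⟩
    · exact ⟨k₂, k₂, le_rfl, by omega, le_max_right _ _, h₂⟩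

lemma exists_cell_of_notMem_uIoo (ha : 0 < a) {p p' : ℕ} (hp' : p' ≤ p + 1) {u v : ℝ}
    (hu : u ∈ Icc (p / a) ((p' + 1) / a)) (hv : v ∈ Icc (p / a) ((p' + 1) / a))
    (hcross : (p + 1) / a ∉ uIoo u v) :
    ∃ c, (c = p ∨ c = p') ∧ u ∈ cell a c ∧ v ∈ cell a c := by
  by_cases hlow : u ≤ (p + 1) / a ∧ v ≤ (p + 1) / a
  · exact ⟨p, Or.inl rfl, ⟨hu.1, hlow.1⟩, ⟨hv.1, hlow.2⟩⟩
  rw [uIoo, mem_Ioo, not_and_or, not_lt, not_lt, sup_le_iff] at hcross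
  have hhigh := le_inf_iff.1 (hcross.resolve_right hlow)
  have : (p' : ℝ) / a ≤ (p + 1) / a :=
    div_le_div_of_nonneg_right (by exact_mod_cast hp') ha.le
  exact ⟨p', Or.inr rfl, ⟨by linarith, hu.2⟩, ⟨by linarith, hv.2⟩⟩

lemma le_and_le_of_mem_cell_inter (ha : 0 < a) {p p' q : ℕ} {u v : ℝ} (huv : u ≠ v)
    (hu : u ∈ cell a q ∩ Icc (p / a) ((p' + 1) / a))
    (hv : v ∈ cell a q ∩ Icc (p / a) ((p' + 1) / a)) :
    p ≤ q ∧ q ≤ p' := by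
  rw [mem_inter_iff, mem_cell_iff ha, mem_Icc_div_iff ha] at hu hv
  have hne : a * u ≠ a * v := fun h => huv (mul_left_cancel₀ ha.ne' h)
  by_contra h
  rcases (by omega : q + 1 ≤ p ∨ p' + 1 ≤ q) with h' | h'
  · have h'' : (q : ℝ) + 1 ≤ p := by exact_mod_cast h'
    exact hne (by linarith)
  · have h'' : (p' : ℝ) + 1 ≤ q := by exact_mod_cast h'
    exact hne (by linarith)

end Cells

lemma subsingleton_setOf_mem_uIoo {g : ℕ → ℝ} (hg : Monotone g ∨ Antitone g) (w : ℝ) :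
    {r | w ∈ uIoo (g r) (g (r + 1))}.Subsingleton := by
  intro r hr r' hr'
  by_contra hne
  wlog hlt : r < r' generalizing r r'
  · exact this hr' hr (Ne.symm hne) (by omega)
  rw [mem_ofPred_eq] at hr hr'
  rcases hg with hg | hg
  · rw [uIoo_of_le (hg r.le_succ), mem_Ioo] at hr
    rw [uIoo_of_le (hg r'.le_succ), mem_Ioo] at hr'
    linarith [hg (show r + 1 ≤ r' by omega)]
  · rw [uIoo_of_ge (hg r.le_succ), mem_Ioo] at hr
    rw [uIoo_of_ge (hg r'.le_succ), mem_Ioo] at hr'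
    linarith [hg (show r + 1 ≤ r' by omega)]

lemma exists_lt_forall_notMem_of_subsingleton {ι : Type*} (s : Finset ι) {m : ℕ}
    (hs : s.card < m) (bad : ι → Set ℕ) (hbad : ∀ j ∈ s, (bad j).Subsingleton) :
    ∃ r < m, ∀ j ∈ s, r ∉ bad j := by
  classical
  let B := s.biUnion fun j => (Finset.range m).filter (· ∈ bad j)
  have hB : B.card < (Finset.range m).card := by
    refine lt_of_le_of_lt (Finset.card_biUnion_le_card_mul _ _ 1 fun j hj => ?_) ?_
    · exact Finset.card_le_one.2 fun r hr r' hr' =>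
        hbad j hj (Finset.mem_filter.1 hr).2 (Finset.mem_filter.1 hr').2
    · simpa using hs
  obtain ⟨r, hr, hrB⟩ := Finset.exists_mem_notMem_of_card_lt_card hB
  exact ⟨r, Finset.mem_range.1 hr, fun j hj hrj =>
    hrB (Finset.mem_biUnion.2 ⟨j, hj, Finset.mem_filter.2 ⟨hr, hrj⟩⟩)⟩

lemma nontrivial_of_hausdorffMeasure_pos {X : Type*} [EMetricSpace X] [MeasurableSpace X]
    [BorelSpace X] {s : ℝ} (hs : 0 < s) {S : Set X} (h : 0 < μH[s] S) : S.Nontrivial := by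
  have := Measure.nullSingletonClass_hausdorff X hs
  by_contra hS
  exact h.ne' ((not_nontrivial_iff.1 hS).measure_zero _)

section Segment

variable {d : ℕ}

lemma proj_image_segment (i : Fin d) (x y : Euc d) :
    proj d i '' segment ℝ x y = uIcc (x i) (y i) := by
  rw [← segment_eq_uIcc]
  exact image_segment ℝ (EuclideanSpace.proj i : Euc d →L[ℝ] ℝ).toLinearMap.toAffineMap x y

lemma coord_mem_uIcc_of_mem_segment {x y z : Euc d} (hz : z ∈ segment ℝ x y) (j : Fin d) :
    z j ∈ uIcc (x j) (y j) :=
  proj_image_segment j x y ▸ mem_image_of_mem (proj d j) hz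

lemma coord_eq_of_mem_segment {x y z z' w : Euc d} (hz : z ∈ segment ℝ x y)
    (hz' : z' ∈ segment ℝ x y) (hne : z ≠ z') {j : Fin d} (hj : z j = z' j)
    (hw : w ∈ segment ℝ x y) : w j = z j := by
  rw [segment_eq_image'] at hz hz' hw
  obtain ⟨t, -, rfl⟩ := hz
  obtain ⟨t', -, rfl⟩ := hz'
  obtain ⟨s, -, rfl⟩ := hw
  have htt : t - t' ≠ 0 := sub_ne_zero.2 fun h => hne (by rw [h])
  simp only [PiLp.add_apply, PiLp.smul_apply, PiLp.sub_apply, smul_eq_mul] at hj ⊢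
  have hxy : y j - x j = 0 :=
    (mul_eq_zero.1 (by linear_combination hj : (t - t') * (y j - x j) = 0)).resolve_left htt
  rw [hxy, mul_zero, mul_zero]

end Segment

section Line

variable {d : ℕ}

def pointAt (x y : Euc d) (i : Fin d) (s : ℝ) : Euc d := x + ((s - x i) / (y i - x i)) • (y - x)

lemma pointAt_apply (x y : Euc d) (i j : Fin d) (s : ℝ) :
    pointAt x y i s j = x j + (s - x i) / (y i - x i) * (y j - x j) := by
  simp [pointAt]

lemma pointAt_apply_self {x y : Euc d} {i : Fin d} (h : x i ≠ y i) (s : ℝ) :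
    pointAt x y i s i = s := by
  rw [pointAt_apply]
  field_simp [sub_ne_zero.2 h.symm]
  ring

lemma pointAt_mem_segment {x y : Euc d} {i : Fin d} (h : x i < y i) {s : ℝ}
    (hs : s ∈ Icc (x i) (y i)) : pointAt x y i s ∈ segment ℝ x y := by
  have hD : 0 ≤ y i - x i := sub_nonneg.2 h.le
  rw [segment_eq_image']
  exact ⟨_, ⟨div_nonneg (sub_nonneg.2 hs.1) hD, div_le_one_of_le₀ (by linarith [hs.2]) hD⟩, rfl⟩

lemma monotone_or_antitone_pointAt_apply {x y : Euc d} {i : Fin d} (h : x i < y i) (j : Fin d) :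
    Monotone (fun s => pointAt x y i s j) ∨ Antitone (fun s => pointAt x y i s j) := by
  have hD : 0 < y i - x i := sub_pos.2 h
  simp only [pointAt_apply]
  rcases le_total (x j) (y j) with hj | hj
  · refine .inl fun s s' hss => ?_
    have := sub_nonneg.2 hj
    dsimp only
    gcongr
  · refine .inr fun s s' hss => ?_
    have := div_le_div_of_nonneg_right (sub_le_sub_right hss (x i)) hD.le
    dsimp only
    nlinarith

lemma exists_principleDir [Nonempty (Fin d)] {ℓ : Set (Euc d)} (hℓ : IsLine d ℓ) :
    ∃ i, PrincipleDir d i ℓ := by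
  obtain ⟨x₀, v, -, rfl⟩ := hℓ
  obtain ⟨i, hi⟩ := Finite.exists_max fun j => |v j|
  refine ⟨i, ?_⟩
  rintro _ ⟨s, rfl⟩ _ ⟨t, rfl⟩ j
  simp only [PiLp.add_apply, PiLp.smul_apply, smul_eq_mul, add_sub_add_left_eq_sub, ← sub_mul,
    abs_mul]
  exact mul_le_mul_of_nonneg_left (hi j) (abs_nonneg _)

lemma IsLine.eq_pointAt {ℓ : Set (Euc d)} (hℓ : IsLine d ℓ) {x y z : Euc d} (hx : x ∈ ℓ)
    (hy : y ∈ ℓ) (hz : z ∈ ℓ) {i : Fin d} (hxy : x i ≠ y i) : z = pointAt x y i (z i) := by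
  obtain ⟨x₀, v, -, rfl⟩ := hℓ
  obtain ⟨s, rfl⟩ := hx
  obtain ⟨t, rfl⟩ := hy
  obtain ⟨u, rfl⟩ := hz
  simp only [PiLp.add_apply, PiLp.smul_apply, smul_eq_mul, ne_eq, add_right_inj] at hxy
  have hts : t - s ≠ 0 := sub_ne_zero.2 fun h => hxy (by rw [h])
  have hv : v i ≠ 0 := fun h => hxy (by rw [h, mul_zero, mul_zero])
  ext j
  simp only [pointAt_apply, PiLp.add_apply, PiLp.smul_apply, smul_eq_mul, add_sub_add_left_eq_sub,
    ← sub_mul]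
  field_simp
  ring

lemma IsLine.inter_eq_segment_inter {ℓ A : Set (Euc d)} (hℓ : IsLine d ℓ) {x y : Euc d}
    (hsub : segment ℝ x y ⊆ ℓ) {i : Fin d} (hxy : x i < y i)
    (hA : ∀ z ∈ A, z i ∈ Icc (x i) (y i)) : ℓ ∩ A = segment ℝ x y ∩ A := by
  refine Subset.antisymm (fun z ⟨hzℓ, hzA⟩ => ⟨?_, hzA⟩) (inter_subset_inter_left A hsub)
  rw [hℓ.eq_pointAt (hsub (left_mem_segment ℝ x y)) (hsub (right_mem_segment ℝ x y)) hzℓ hxy.ne]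
  exact pointAt_mem_segment hxy (hA z hzA)

variable {N n : ℕ} {ℓ A : Set (Euc d)} {p q : Euc d}

lemma veryProperly_of_segment_subset {i : Fin d} (hpq : segment ℝ p q ⊆ ℓ ∩ A) (K : ℤ)
    (hp : p i = K * ((d : ℝ)⁻¹ * ((N : ℝ) ^ n)⁻¹))
    (hq : q i = (K + 1) * ((d : ℝ)⁻¹ * ((N : ℝ) ^ n)⁻¹)) : VeryProperly d N i ℓ A n := by
  refine ⟨K, ?_⟩
  rw [← hp, ← hq]
  exact Icc_subset_uIcc.trans (proj_image_segment i p q ▸ image_mono hpq)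

lemma properly_of_segment_subset (hℓ : IsLine d ℓ) (hpq : segment ℝ p q ⊆ ℓ ∩ A) {i : Fin d}
    (hlen : (d : ℝ)⁻¹ * ((N : ℝ) ^ n)⁻¹ ≤ |q i - p i|) : Properly d N ℓ A n := by
  have : Nonempty (Fin d) := ⟨i⟩
  obtain ⟨i₀, hi₀⟩ := exists_principleDir hℓ
  refine ⟨i₀, hi₀, ?_⟩
  calc ENNReal.ofReal ((d : ℝ)⁻¹ * ((N : ℝ) ^ n)⁻¹)
      ≤ ENNReal.ofReal |q i₀ - p i₀| := ENNReal.ofReal_le_ofReal <|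
        hlen.trans (hi₀ p (hpq (left_mem_segment ℝ p q)).1 q (hpq (right_mem_segment ℝ p q)).1 i)
    _ = μH[1] (proj d i₀ '' segment ℝ p q) := by
        rw [proj_image_segment, hausdorffMeasure_real, Real.volume_interval]
    _ ≤ μH[1] (proj d i₀ '' (ℓ ∩ A)) := measure_mono (image_mono hpq)

end Line

section Grid

variable {d N n : ℕ}

lemma segment_subset_gridCube {l : Fin d → Fin (N ^ n)} {u v : Euc d}
    (hu : u ∈ gridCube d N n l) (hv : v ∈ gridCube d N n l) :
    segment ℝ u v ⊆ gridCube d N n l := fun _ hz j =>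
  uIcc_subset_Icc (hu j) (hv j) (coord_mem_uIcc_of_mem_segment hz j)

lemma gridCube_inter_nonempty {l l' : Fin d → Fin (N ^ n)}
    (h : ∀ j, (cell ((N : ℝ) ^ n) (l j) ∩ cell ((N : ℝ) ^ n) (l' j)).Nonempty) :
    (gridCube d N n l ∩ gridCube d N n l').Nonempty := by
  choose w hw using h
  exact ⟨ptOf d w, fun j => (hw j).1, fun j => (hw j).2⟩

lemma interior_nLayer (i : Fin d) (k : ℕ) :
    interior (nLayer d N n i k) =
      {z | z i ∈ Ioo ((k : ℝ) / (N : ℝ) ^ n) (((k : ℝ) + 1) / (N : ℝ) ^ n)} := by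
  change interior ((fun z : Euc d => z i) ⁻¹' _) = (fun z : Euc d => z i) ⁻¹' _
  rw [← (PiLp.isOpenMap_apply 2 _ i).preimage_interior_eq_interior_preimage
    (PiLp.continuous_apply 2 _ i), interior_Icc]

lemma SegPassesThrough.opposite_sides {x y : Euc d} {i : Fin d} {k : ℕ}
    (h : SegPassesThrough d x y (nLayer d N n i k)) :
    (x i ≤ k / (N : ℝ) ^ n ∧ (k + 1) / (N : ℝ) ^ n ≤ y i) ∨
      (y i ≤ k / (N : ℝ) ^ n ∧ (k + 1) / (N : ℝ) ^ n ≤ x i) := by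
  obtain ⟨hx, hy, hne⟩ := h
  obtain ⟨z, hz, hzL⟩ : ∃ z ∈ segment ℝ x y, z ∈ interior (nLayer d N n i k) := by
    by_contra! hseg
    exact hne (connectedComponentIn_eq ((convex_segment x y).isPreconnected.subset_connectedComponentIn
      (left_mem_segment ℝ x y) hseg (right_mem_segment ℝ x y)))
  have hzi := coord_mem_uIcc_of_mem_segment hz i
  simp only [interior_nLayer, mem_compl_iff, mem_ofPred_eq, mem_Ioo, not_and_or, not_lt] at hx hy hzL
  rw [mem_uIcc] at hzi
  rcases hx with hx | hx <;> rcases hy with hy | hy <;> rcases hzi with hzi | hzi <;>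
    first | exact .inl ⟨hx, hy⟩ | exact .inr ⟨hy, hx⟩ | (exfalso; linarith)

end Grid

section Observation

variable {d N n : ℕ} {i : Fin d} {k : ℕ} {x y : Euc d}

lemma exists_adjacent_layers_of_segment_subset_union (hN : 0 < N) {j : Fin d} {k₁ k₂ : ℕ}
    (hk₁ : k₁ < N ^ n) (hk₂ : k₂ < N ^ n)
    (hseg : segment ℝ x y ⊆ nLayer d N n j k₁ ∪ nLayer d N n j k₂) :
    ∃ p p' : ℕ, p ≤ p' ∧ p' ≤ p + 1 ∧ p' < N ^ n ∧
      ∀ z ∈ segment ℝ x y, z j ∈ Icc (p / (N : ℝ) ^ n) ((p' + 1) / (N : ℝ) ^ n) := by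
  obtain ⟨p, p', hpp', hp'p, hp'k, hwin⟩ :=
    exists_adjacent_cells_of_subset_union (u := x j) (v := y j) (by positivity : (0 : ℝ) < N ^ n)
      (k₁ := k₁) (k₂ := k₂) <| by
        rw [← proj_image_segment]
        rintro _ ⟨z, hz, rfl⟩
        exact hseg hz
  exact ⟨p, p', hpp', hp'p, hp'k.trans_lt (max_lt hk₁ hk₂),
    fun z hz => hwin (coord_mem_uIcc_of_mem_segment hz j)⟩

lemma exists_index_forall_notMem_uIoo (hxy : x i < y i) {s : ℕ → ℝ} (hs : Monotone s)
    (w : Fin d → ℝ) :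
    ∃ r < d, ∀ j ≠ i, w j ∉ uIoo (pointAt x y i (s r) j) (pointAt x y i (s (r + 1)) j) := by
  have hcard : (Finset.univ.erase i).card < d := by
    rw [Finset.card_erase_of_mem (Finset.mem_univ i), Finset.card_univ, Fintype.card_fin]
    exact Nat.sub_lt i.pos one_pos
  obtain ⟨r, hr, h⟩ := exists_lt_forall_notMem_of_subsingleton _ hcard
    (fun j => {r | w j ∈ uIoo (pointAt x y i (s r) j) (pointAt x y i (s (r + 1)) j)})
    fun j _ => subsingleton_setOf_mem_uIoo
      ((monotone_or_antitone_pointAt_apply hxy j).imp (·.comp hs) (·.comp_monotone hs)) (w j)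
  exact ⟨r, hr, fun j hj => h j (Finset.mem_erase.2 ⟨hj, Finset.mem_univ j⟩)⟩

lemma exists_gridCube_containing_piece (hN : 0 < N) (hk : k < N ^ n)
    (hxi : x i ≤ k / (N : ℝ) ^ n) (hyi : (k + 1) / (N : ℝ) ^ n ≤ y i) {p p' : Fin d → ℕ}
    (hpp' : ∀ j, p j ≤ p' j) (hp'p : ∀ j, p' j ≤ p j + 1) (hp' : ∀ j, p' j < N ^ n)
    (hwin : ∀ j ≠ i, ∀ z ∈ segment ℝ x y,
      z j ∈ Icc (p j / (N : ℝ) ^ n) ((p' j + 1) / (N : ℝ) ^ n)) :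
    ∃ l : Fin d → Fin (N ^ n), (l i : ℕ) = k ∧ (∀ j ≠ i, (l j : ℕ) = p j ∨ (l j : ℕ) = p' j) ∧
      ∃ u ∈ segment ℝ x y ∩ gridCube d N n l, ∃ v ∈ segment ℝ x y ∩ gridCube d N n l, ∃ K : ℤ,
        u i = K * ((d : ℝ)⁻¹ * ((N : ℝ) ^ n)⁻¹) ∧
          v i = (K + 1) * ((d : ℝ)⁻¹ * ((N : ℝ) ^ n)⁻¹) := by
  set a : ℝ := (N : ℝ) ^ n
  have ha : 0 < a := by positivity
  have hd : (0 : ℝ) < d := by exact_mod_cast i.pos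
  have hxy : x i < y i :=
    hxi.trans_lt ((div_lt_div_iff_of_pos_right ha).2 (lt_add_one _) |>.trans_le hyi)
  -- `s 0, …, s d` cut `cell a k` into `d` pieces; the piece `[s r, s (r + 1)]` has `K = k d + r`.
  set s : ℕ → ℝ := fun r => ((k * d + r : ℕ) : ℝ) * ((d : ℝ)⁻¹ * a⁻¹) with hs
  have hs_mono : Monotone s := fun r r' h => by
    simp only [hs]
    gcongr
  have hs_cell : ∀ r ≤ d, s r ∈ cell a k := by
    intro r hr
    have har : a * s r = k + r / d := by
      simp only [hs]
      push_cast
      field_simp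
    rw [mem_cell_iff ha, har]
    have : (r : ℝ) / d ≤ 1 := div_le_one_of_le₀ (by exact_mod_cast hr) hd.le
    constructor <;> linarith [div_nonneg (Nat.cast_nonneg r) hd.le]
  obtain ⟨r, hr, hcross⟩ := exists_index_forall_notMem_uIoo hxy hs_mono fun j => (p j + 1) / a
  have hseg : ∀ r ≤ d, pointAt x y i (s r) ∈ segment ℝ x y := fun r hr =>
    pointAt_mem_segment hxy ⟨hxi.trans (hs_cell r hr).1, (hs_cell r hr).2.trans hyi⟩
  have hcell : ∀ j, ∃ c < N ^ n, (j = i → c = k) ∧ (j ≠ i → c = p j ∨ c = p' j) ∧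
      pointAt x y i (s r) j ∈ cell a c ∧ pointAt x y i (s (r + 1)) j ∈ cell a c := by
    intro j
    rcases eq_or_ne j i with rfl | hj
    · simp only [pointAt_apply_self hxy.ne]
      exact ⟨k, hk, fun _ => rfl, fun h => absurd rfl h, hs_cell r hr.le, hs_cell (r + 1) hr⟩
    · obtain ⟨c, hc, hu, hv⟩ := exists_cell_of_notMem_uIoo ha (hp'p j)
        (hwin j hj _ (hseg r hr.le)) (hwin j hj _ (hseg (r + 1) hr)) (hcross j hj)
      exact ⟨c, by have := hp' j; have := hpp' j; omega, fun h => absurd h hj, fun _ => hc, hu, hv⟩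
  choose c hcN hci hcp hu hv using hcell
  refine ⟨fun j => ⟨c j, hcN j⟩, hci i rfl, hcp, _, ⟨hseg r hr.le, hu⟩, _, ⟨hseg (r + 1) hr, hv⟩,
    k * d + r, ?_, ?_⟩ <;>
  · rw [pointAt_apply_self hxy.ne, hs]
    push_cast
    ring

lemma gridCube_inter_nonempty_of_mem_segment (hN : 0 < N) {l l' : Fin d → Fin (N ^ n)}
    (hli : (l i : ℕ) = k) {p p' : Fin d → ℕ} (hp'p : ∀ j, p' j ≤ p j + 1)
    (hlp : ∀ j ≠ i, (l j : ℕ) = p j ∨ (l j : ℕ) = p' j)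
    (hwin : ∀ j ≠ i, ∀ z ∈ segment ℝ x y,
      z j ∈ Icc (p j / (N : ℝ) ^ n) ((p' j + 1) / (N : ℝ) ^ n))
    {u : Euc d} (hu : u ∈ segment ℝ x y ∩ gridCube d N n l)
    (hl' : gridCube d N n l' ⊆ nLayer d N n i k) {z z' : Euc d}
    (hz : z ∈ segment ℝ x y ∩ gridCube d N n l') (hz' : z' ∈ segment ℝ x y ∩ gridCube d N n l')
    (hne : z ≠ z') :
    (gridCube d N n l ∩ gridCube d N n l').Nonempty := by
  have ha : (0 : ℝ) < (N : ℝ) ^ n := by positivity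
  refine gridCube_inter_nonempty fun j => ?_
  rcases eq_or_ne j i with rfl | hj
  · exact ⟨z j, hli ▸ hl' hz.2, hz.2 j⟩
  by_cases hzj : z j = z' j
  · exact ⟨z j, coord_eq_of_mem_segment hz.1 hz'.1 hne hzj hu.1 ▸ hu.2 j, hz.2 j⟩
  obtain ⟨h₁, h₂⟩ := le_and_le_of_mem_cell_inter ha hzj ⟨hz.2 j, hwin j hj z hz.1⟩
    ⟨hz'.2 j, hwin j hj z' hz'.1⟩
  have := hp'p j
  exact cell_inter_nonempty ha (by rcases hlp j hj with h | h <;> omega)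
    (by rcases hlp j hj with h | h <;> omega)

lemma proper_intersection_observation_of_le (hN : 0 < N) (hk : k < N ^ n)
    (hxi : x i ≤ k / (N : ℝ) ^ n) (hyi : (k + 1) / (N : ℝ) ^ n ≤ y i)
    (hb : ∀ j : Fin d, j ≠ i → ∃ k1 k2 : ℕ, k1 < N ^ n ∧ k2 < N ^ n ∧
      segment ℝ x y ⊆ nLayer d N n j k1 ∪ nLayer d N n j k2)
    {ℓ : Set (Euc d)} (hline : IsLine d ℓ) (hsub : segment ℝ x y ⊆ ℓ) :
    ∃ l : Fin d → Fin (N ^ n),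
      gridCube d N n l ⊆ nLayer d N n i k ∧
      VeryProperly d N i ℓ (gridCube d N n l) n ∧
      Properly d N ℓ (gridCube d N n l) n ∧
      ℓ ∩ gridCube d N n l = segment ℝ x y ∩ gridCube d N n l ∧
      ∀ l' : Fin d → Fin (N ^ n), gridCube d N n l' ⊆ nLayer d N n i k →
        0 < μH[1] (segment ℝ x y ∩ gridCube d N n l') →
        (gridCube d N n l ∩ gridCube d N n l').Nonempty := by
  have ha : (0 : ℝ) < (N : ℝ) ^ n := by positivity
  have hwin : ∀ j, ∃ p p' : ℕ, p ≤ p' ∧ p' ≤ p + 1 ∧ p' < N ^ n ∧ (j ≠ i → ∀ z ∈ segment ℝ x y,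
      z j ∈ Icc (p / (N : ℝ) ^ n) ((p' + 1) / (N : ℝ) ^ n)) := by
    intro j
    rcases eq_or_ne j i with rfl | hj
    · exact ⟨k, k, le_rfl, by omega, hk, fun h => absurd rfl h⟩
    obtain ⟨k₁, k₂, hk₁, hk₂, hseg⟩ := hb j hj
    obtain ⟨p, p', h⟩ := exists_adjacent_layers_of_segment_subset_union hN hk₁ hk₂ hseg
    exact ⟨p, p', h.1, h.2.1, h.2.2.1, fun _ => h.2.2.2⟩
  choose p p' hpp' hp'p hp' hwin using hwin
  obtain ⟨l, hli, hlp, u, hu, v, hv, K, huK, hvK⟩ :=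
    exists_gridCube_containing_piece hN hk hxi hyi hpp' hp'p hp' hwin
  have hlayer : gridCube d N n l ⊆ nLayer d N n i k := fun z hz => hli ▸ hz i
  have huv : segment ℝ u v ⊆ ℓ ∩ gridCube d N n l := fun z hz =>
    ⟨hsub ((convex_segment x y).segment_subset hu.1 hv.1 hz), segment_subset_gridCube hu.2 hv.2 hz⟩
  refine ⟨l, hlayer, veryProperly_of_segment_subset huv K huK hvK,
    properly_of_segment_subset hline huv (i := i) ?_,
    hline.inter_eq_segment_inter hsub (hxi.trans_lt ?_) fun z hz => ?_, fun l' hl' hpos => ?_⟩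
  · rw [huK, hvK, ← sub_mul, add_sub_cancel_left, one_mul, abs_of_nonneg (by positivity)]
  · exact (div_lt_div_iff_of_pos_right ha).2 (lt_add_one _) |>.trans_le hyi
  · exact ⟨hxi.trans (hlayer hz).1, (hlayer hz).2.trans hyi⟩
  · obtain ⟨z, hz, z', hz', hne⟩ := nontrivial_of_hausdorffMeasure_pos one_pos hpos
    exact gridCube_inter_nonempty_of_mem_segment hN hli hp'p hlp hwin hu hl' hz hz' hne

end Observation

end FracPerc

theorem proper_intersection_observation_general
    (d N : ℕ) (hN : 2 ≤ N) (n : ℕ) (i : Fin d) (k : ℕ) (hk : k < N ^ n)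
    (x y : Euc d)
    (ha : SegPassesThrough d x y (nLayer d N n i k))
    (hb : ∀ j : Fin d, j ≠ i → ∃ k1 k2 : ℕ, k1 < N ^ n ∧ k2 < N ^ n ∧
      segment ℝ x y ⊆ nLayer d N n j k1 ∪ nLayer d N n j k2)
    (ℓ : Set (Euc d)) (hline : IsLine d ℓ) (hsub : segment ℝ x y ⊆ ℓ) :
    ∃ l : Fin d → Fin (N ^ n),
      gridCube d N n l ⊆ nLayer d N n i k ∧
      VeryProperly d N i ℓ (gridCube d N n l) n ∧
      Properly d N ℓ (gridCube d N n l) n ∧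
      ℓ ∩ gridCube d N n l = segment ℝ x y ∩ gridCube d N n l ∧
      ∀ l' : Fin d → Fin (N ^ n), gridCube d N n l' ⊆ nLayer d N n i k →
        0 < μH[1] (segment ℝ x y ∩ gridCube d N n l') →
        (gridCube d N n l ∩ gridCube d N n l').Nonempty := by
  rcases ha.opposite_sides with ⟨hx, hy⟩ | ⟨hy, hx⟩
  · exact proper_intersection_observation_of_le (by omega) hk hx hy hb hline hsub
  · simp only [segment_symm ℝ x y] at hb hsub ⊢
    exact proper_intersection_observation_of_le (by omega) hk hy hx hb hline hsub

/-- (Observation on proper intersections.) -/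
theorem proper_intersection_observation
    (d N : ℕ) (hd : 2 ≤ d) (hN : 2 ≤ N) (n : ℕ) (i : Fin d) (k : ℕ) (hk : k < N ^ n)
    (x y : Euc d)
    (ha : SegPassesThrough d x y (nLayer d N n i k))
    (hb : ∀ j : Fin d, j ≠ i → ∃ k1 k2 : ℕ, k1 < N ^ n ∧ k2 < N ^ n ∧
      segment ℝ x y ⊆ nLayer d N n j k1 ∪ nLayer d N n j k2)
    (ℓ : Set (Euc d)) (hline : IsLine d ℓ) (hsub : segment ℝ x y ⊆ ℓ) :
    ∃ l : Fin d → Fin (N ^ n),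
      gridCube d N n l ⊆ nLayer d N n i k ∧
      VeryProperly d N i ℓ (gridCube d N n l) n ∧
      Properly d N ℓ (gridCube d N n l) n ∧
      ℓ ∩ gridCube d N n l = segment ℝ x y ∩ gridCube d N n l ∧
      ∀ l' : Fin d → Fin (N ^ n), gridCube d N n l' ⊆ nLayer d N n i k →
        0 < μH[1] (segment ℝ x y ∩ gridCube d N n l') →
        (gridCube d N n l ∩ gridCube d N n l').Nonempty :=
  proper_intersection_observation_general d N hN n i k hk x y ha hb ℓ hline hsub
end
end

section
/- Let x = (1, x_2, …, x_d) and w = (0, 1, w_3, …, w_d) be points in ℝ^d with 0 ≤ x_j ≤ 1 for all j = 2,…,d and 0 ≤ w_j ≤ 1 for all j = 3,…,d. Let ℓ be the line through the origin spanned by x. Then dist(w, ℓ) ≥ 1/√2. -/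
open MeasureTheory Set
open scoped ENNReal NNReal

noncomputable section

open FracPerc

/-- For `t ≥ 0` use `(t + s)² ≤ 2 (t² + s²)` with `t + s = 1 + t (1 - a) ≥ 1`; for `t < 0`
already `1 - t a ≥ 1`. -/
theorem half_le_sq_add_sq_one_sub_mul (t : ℝ) {a : ℝ} (ha : a ∈ Icc (0 : ℝ) 1) :
    1 / 2 ≤ t ^ 2 + (1 - t * a) ^ 2 := by
  obtain ⟨ha0, ha1⟩ := ha
  rcases le_or_gt 0 t with ht | ht
  · have hsum : 1 ≤ t + (1 - t * a) := by nlinarith [mul_nonneg ht (sub_nonneg.2 ha1)]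
    nlinarith [sq_nonneg (t - (1 - t * a))]
  · have hta : t * a ≤ 0 := mul_nonpos_of_nonpos_of_nonneg ht.le ha0
    nlinarith [sq_nonneg t]

theorem EuclideanSpace.sq_sub_add_sq_sub_le_dist_sq {ι : Type*} [Fintype ι] {i j : ι}
    (hij : i ≠ j) (u v : EuclideanSpace ℝ ι) :
    (u i - v i) ^ 2 + (u j - v j) ^ 2 ≤ dist u v ^ 2 := by
  classical
  rw [EuclideanSpace.dist_eq, Real.sq_sqrt (by positivity)]
  simp only [Real.dist_eq, sq_abs]
  rw [← Finset.sum_pair (f := fun k => (u k - v k) ^ 2) hij]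
  exact Finset.sum_le_sum_of_subset_of_nonneg (Finset.subset_univ _) fun _ _ _ => sq_nonneg _

/-- Minimum distance of `w = (0,1,w₃,…,w_d)` to the line spanned by
`x = (1,x₂,…,x_d)`. -/
theorem min_distance_to_spanned_line
    (d : ℕ) (hd : 2 ≤ d) (x w : Euc d)
    (hx0 : x ⟨0, by omega⟩ = 1)
    (hx : ∀ j : Fin d, j ≠ ⟨0, by omega⟩ → x j ∈ Icc (0 : ℝ) 1)
    (hw0 : w ⟨0, by omega⟩ = 0) (hw1 : w ⟨1, by omega⟩ = 1) :
    1 / Real.sqrt 2 ≤ Metric.infDist w {y : Euc d | ∃ t : ℝ, y = t • x} := by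
  have h01 : (⟨0, by omega⟩ : Fin d) ≠ ⟨1, by omega⟩ := by simp [Fin.ext_iff]
  have hline : {y : Euc d | ∃ t : ℝ, y = t • x}.Nonempty := ⟨0, 0, by simp⟩
  rw [Metric.le_infDist hline]
  rintro _ ⟨t, rfl⟩
  have hcoord := EuclideanSpace.sq_sub_add_sq_sub_le_dist_sq h01 w (t • x)
  simp only [PiLp.smul_apply, smul_eq_mul, hx0, hw0, hw1, mul_one, zero_sub, neg_sq] at hcoord
  have hsq : 1 / 2 ≤ dist w (t • x) ^ 2 :=
    (half_le_sq_add_sq_one_sub_mul t (hx _ h01.symm)).trans hcoord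
  rw [one_div, ← Real.sqrt_inv, ← one_div, ← Real.sqrt_sq dist_nonneg]
  exact Real.sqrt_le_sqrt hsq
end
end

section
/- If j ∈ {1,…,d} is a principle direction of a line ℓ ⊂ ℝ^d, then for every w ∈ ℝ^d one has d_∞(w, ℓ ∩ Π_j^{−1}(Π_j(w))) ≤ √2 · dist(w, ℓ). -/
open MeasureTheory Set
open scoped ENNReal NNReal

noncomputable section

open FracPerc

/-! Since `j` is a principal direction, `ℓ` meets the hyperplane `{y j = w j}` in a point `p`.
For any `q ∈ ℓ` and `i ≠ j`, the triangle inequality through `q` and the principal direction give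
`|w i - p i| ≤ |w i - q i| + |q j - p j| = |w i - q i| + |w j - q j|`, and two coordinates of
`w - q` add up to at most `√2 · dist w q`. -/

namespace FracPerc

theorem abs_sub_add_abs_sub_le_sqrt_two_mul_dist {ι : Type*} [Fintype ι]
    (x y : EuclideanSpace ℝ ι) {i j : ι} (hij : i ≠ j) :
    |x i - y i| + |x j - y j| ≤ √2 * dist x y := by
  classical
  have hpair : |x i - y i| ^ 2 + |x j - y j| ^ 2 ≤ dist x y ^ 2 := by
    simp only [EuclideanSpace.dist_sq_eq, Real.dist_eq]
    rw [← Finset.sum_pair hij (f := fun k => |x k - y k| ^ 2)]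
    exact Finset.sum_le_sum_of_subset_of_nonneg (Finset.subset_univ _) fun k _ _ => by positivity
  rw [← Real.sqrt_sq dist_nonneg, ← Real.sqrt_mul zero_le_two, Real.le_sqrt (by positivity)
    (by positivity)]
  nlinarith [sq_nonneg (|x i - y i| - |x j - y j|)]

theorem dmax_nonneg {d : ℕ} (x y : Euc d) : 0 ≤ dmax d x y :=
  Real.iSup_nonneg fun _ => abs_nonneg _

theorem dmaxSet_le_dmax {d : ℕ} {w p : Euc d} {A : Set (Euc d)} (hp : p ∈ A) :
    dmaxSet d w A ≤ dmax d w p :=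
  csInf_le ⟨0, by rintro _ ⟨y, -, rfl⟩; exact dmax_nonneg w y⟩ ⟨p, hp, rfl⟩

namespace PrincipleDir

variable {d : ℕ} {j : Fin d}

theorem apply_ne_zero {x v : Euc d} (hpd : PrincipleDir d j (lineThrough d x v)) (hv : v ≠ 0) :
    v j ≠ 0 := by
  intro hvj
  refine hv (PiLp.ext fun i => ?_)
  simpa [hvj] using hpd x ⟨0, by simp⟩ (x + (1 : ℝ) • v) ⟨1, rfl⟩ i

theorem exists_mem_apply_eq {x v : Euc d} (hpd : PrincipleDir d j (lineThrough d x v))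
    (hv : v ≠ 0) (c : ℝ) : ∃ p ∈ lineThrough d x v, p j = c := by
  refine ⟨x + ((c - x j) / v j) • v, ⟨_, rfl⟩, ?_⟩
  have hvj := hpd.apply_ne_zero hv
  simp only [PiLp.add_apply, PiLp.smul_apply, smul_eq_mul]
  field_simp
  ring

theorem abs_sub_le_sqrt_two_mul_dist {s : Set (Euc d)} (hs : PrincipleDir d j s) {p q w : Euc d}
    (hp : p ∈ s) (hq : q ∈ s) (hpw : p j = w j) (i : Fin d) :
    |w i - p i| ≤ √2 * dist w q := by
  rcases eq_or_ne i j with rfl | hij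
  · rw [hpw, sub_self, abs_zero]
    positivity
  calc |w i - p i| ≤ |w i - q i| + |q i - p i| := abs_sub_le _ _ _
    _ ≤ |w i - q i| + |w j - q j| := by
        have hmove := hs p hp q hq i
        rw [hpw, abs_sub_comm (q j)] at hmove
        linarith
    _ ≤ √2 * dist w q := abs_sub_add_abs_sub_le_sqrt_two_mul_dist w q hij

theorem dmax_le_sqrt_two_mul_infDist {s : Set (Euc d)} (hs : PrincipleDir d j s) {p w : Euc d}
    (hp : p ∈ s) (hpw : p j = w j) : dmax d w p ≤ √2 * Metric.infDist w s := by
  have hsqrt : (0 : ℝ) < √2 := by positivity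
  refine Real.iSup_le (fun i => ?_) (mul_nonneg hsqrt.le Metric.infDist_nonneg)
  rw [← div_le_iff₀' hsqrt, Metric.le_infDist ⟨p, hp⟩]
  intro q hq
  rw [div_le_iff₀' hsqrt]
  exact hs.abs_sub_le_sqrt_two_mul_dist hp hq hpw i

end PrincipleDir

end FracPerc

theorem dmax_le_sqrt_two_mul_dist_general
    (d : ℕ) (ℓ : Set (Euc d)) (hline : IsLine d ℓ)
    (j : Fin d) (hpd : PrincipleDir d j ℓ) (w : Euc d) :
    dmaxSet d w (ℓ ∩ {y : Euc d | y j = w j}) ≤ Real.sqrt 2 * Metric.infDist w ℓ := by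
  obtain ⟨x, v, hv, rfl⟩ := hline
  obtain ⟨p, hp, hpw⟩ := hpd.exists_mem_apply_eq hv (w j)
  calc dmaxSet d w (lineThrough d x v ∩ {y : Euc d | y j = w j}) ≤ dmax d w p :=
        dmaxSet_le_dmax ⟨hp, hpw⟩
    _ ≤ √2 * Metric.infDist w (lineThrough d x v) := hpd.dmax_le_sqrt_two_mul_infDist hp hpw

/-- If `j` is a principle direction of a line `ℓ` then
`d_∞(w, ℓ ∩ Π_j⁻¹(Π_j(w))) ≤ √2 · dist(w, ℓ)` for every `w`. -/
theorem dmax_le_sqrt_two_mul_dist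
    (d : ℕ) (hd : 2 ≤ d) (ℓ : Set (Euc d)) (hline : IsLine d ℓ)
    (j : Fin d) (hpd : PrincipleDir d j ℓ) (w : Euc d) :
    dmaxSet d w (ℓ ∩ {y : Euc d | y j = w j}) ≤ Real.sqrt 2 * Metric.infDist w ℓ :=
  dmax_le_sqrt_two_mul_dist_general d ℓ hline j hpd w
end
end

section
/- Let (F_n)_{n∈ℕ} be a sequence of independent sub-σ-algebras of ℬ on Ω. For each n ∈ ℕ let A_n : Ω × 𝒬_n → {0,1} be such that A_n(·,Q) is F_n-measurable for every Q ∈ 𝒬_n. Let 0 ≤ ρ ≤ 1 and assume ℙ_p({ω : A_n(ω,Q) = 1}) ≤ ρ for all n and all Q ∈ 𝒬_n. Let M_1 ∈ ℕ and let ≃ be a reflexive relation on ⋃_n 𝒬_n such that every Q ∈ 𝒬_n has at most M_1 cubes Q' ∈ 𝒬_n with Q' ≃ Q, and Q' ≄ Q whenever Q' ∈ 𝒬_m with m ≠ n. For ω ∈ Ω say Q ∈ 𝒬_n is selected if A_n(ω,Q') = 1 for some Q' ≃ Q, and set Ẽ_n(ω) := ⋃{Q ∈ 𝒬_n : Q selected}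 and Ẽ^k(ω) := ⋂_{n≥k} Ẽ_n(ω). Then, with s := log(max{M_1 ρ N^d, 1}) / log N (so s → 0 as ρ → 0), for every k ∈ ℕ one has dim_H Ẽ^k(ω) ≤ s for ℙ_p-almost every ω ∈ Ω. -/
open MeasureTheory Set
open scoped ENNReal NNReal

noncomputable section

open FracPerc

/-!
Sort the points of `ℝ^d` into countably many classes by which coordinates are `N`-adic, fixing
the value of each `N`-adic coordinate. A non-`N`-adic coordinate lies in exactly one closed grid
interval of each level, an `N`-adic one in at most two. So if `x` lies in a selected cube at every
level `k ≤ m ≤ K`, then the level-`K` box of its class containing `x` meets, at every such level,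
a selected cube among at most `2^e` given ones (`e` the number of `N`-adic coordinates): by
independence this has probability at most `(2^e M₁ ρ)^(K-k+1)`. There are `N^(K(d-e))` boxes, of
diameter `√d N^(-K)`, so the expected `a`-dimensional cover sums are summable as soon as
`N^(d-e) 2^e M₁ ρ < N^a`, which, as `2 ≤ N`, holds for every `a > s`. Borel–Cantelli then gives
`μH[a] = 0` on each class almost surely.
-/

namespace FracPerc

open Filter Topology
open scoped Finset

theorem ae_hausdorffMeasure_eq_zero_of_tsum_ne_top {Ω X ι : Type*} [MeasurableSpace Ω]
    [EMetricSpace X] [MeasurableSpace X] [BorelSpace X] (μ : Measure Ω) (S : Ω → Set X)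
    (keys : ℕ → Finset ι) (U : ℕ → ι → Set X) (E : ℕ → ι → Set Ω) (δ : ℕ → ℝ≥0∞) {a : ℝ}
    (ha : 0 < a) (hδ : Tendsto δ atTop (𝓝 0)) (hU : ∀ n i, Metric.ediam (U n i) ≤ δ n)
    (hS : ∀ ω n, S ω ⊆ ⋃ i ∈ keys n, ⋃ _ : ω ∈ E n i, U n i)
    (hsum : ∑' n, (∑ i ∈ keys n, μ (E n i)) * δ n ^ a ≠ ∞) :
    ∀ᵐ ω ∂μ, μH[a] (S ω) = 0 := by
  classical
  -- `toMeasurable` makes the random cover count measurable without changing its mean.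
  have hmeas_ind : ∀ n i, Measurable ((toMeasurable μ (E n i)).indicator (1 : Ω → ℝ≥0∞)) :=
    fun n i => measurable_one.indicator (measurableSet_toMeasurable μ _)
  set f : ℕ → Ω → ℝ≥0∞ := fun n ω =>
    (∑ i ∈ keys n, (toMeasurable μ (E n i)).indicator 1 ω) * δ n ^ a
  have hf_meas : ∀ n, Measurable (f n) := fun n =>
    (Finset.measurable_sum _ fun i _ => hmeas_ind n i).mul_const _
  have hf_int : ∀ n, ∫⁻ ω, f n ω ∂μ = (∑ i ∈ keys n, μ (E n i)) * δ n ^ a := by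
    intro n
    simp only [f]
    rw [lintegral_mul_const _ (Finset.measurable_sum _ fun i _ => hmeas_ind n i),
      lintegral_finsetSum _ fun i _ => hmeas_ind n i]
    simp_rw [lintegral_indicator_one (measurableSet_toMeasurable μ _), measure_toMeasurable]
  have hfin : ∀ᵐ ω ∂μ, ∑' n, f n ω < ∞ := by
    refine ae_lt_top (Measurable.tsum hf_meas) ?_
    rwa [lintegral_tsum fun n => (hf_meas n).aemeasurable, tsum_congr hf_int]
  filter_upwards [hfin] with ω hω
  refine le_antisymm ?_ zero_le
  calc μH[a] (S ω)
      ≤ liminf (fun n => ∑ i : keys n,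
          Metric.ediam (if ω ∈ E n i then U n i else ∅) ^ a) atTop := by
        refine Measure.hausdorffMeasure_le_liminf_sum a (S ω) δ hδ _
          (Eventually.of_forall fun n i => ?_) (Eventually.of_forall fun n x hx => ?_)
        · split_ifs
          · exact hU n i
          · simp
        · obtain ⟨i, hi, hωi, hxi⟩ : ∃ i ∈ keys n, ω ∈ E n i ∧ x ∈ U n i := by
            simpa [and_left_comm] using hS ω n hx
          exact mem_iUnion.2 ⟨⟨i, hi⟩, by simpa [hωi] using hxi⟩
    _ ≤ liminf (fun n => f n ω) atTop := by
        refine liminf_le_liminf (Eventually.of_forall fun n => ?_)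
        rw [Finset.sum_coe_sort (keys n) fun i =>
          Metric.ediam (if ω ∈ E n i then U n i else ∅) ^ a]
        simp only [f, Finset.sum_mul]
        refine Finset.sum_le_sum fun i _ => ?_
        split_ifs with hωi
        · rw [indicator_of_mem (subset_toMeasurable μ _ hωi), Pi.one_apply, one_mul]
          exact ENNReal.rpow_le_rpow (hU n i) ha.le
        · simp [ha]
    _ = 0 := (ENNReal.tendsto_atTop_zero_of_tsum_ne_top hω.ne).liminf_eq

theorem dimH_le_of_forall_hausdorffMeasure_eq_zero {X : Type*} [EMetricSpace X]
    [MeasurableSpace X] [BorelSpace X] {S : Set X} {s : ℝ} (hs : 0 ≤ s)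
    (h : ∀ j : ℕ, μH[s + 1 / (j + 1)] S = 0) : dimH S ≤ ENNReal.ofReal s := by
  have hlim : Tendsto (fun j : ℕ => ENNReal.ofReal (s + 1 / (j + 1))) atTop
      (𝓝 (ENNReal.ofReal s)) := by
    simpa using ENNReal.tendsto_ofReal
      ((tendsto_one_div_add_atTop_nhds_zero_nat (𝕜 := ℝ)).const_add s)
  refine ge_of_tendsto' hlim fun j => dimH_le_of_hausdorffMeasure_ne_top ?_
  rw [Real.coe_toNNReal _ (by positivity), h j]
  exact ENNReal.zero_ne_top

theorem measure_biInter_le_pow_card {Ω ι : Type*} {mΩ : MeasurableSpace Ω} {μ : Measure Ω}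
    {F : ι → MeasurableSpace Ω} (hind : ProbabilityTheory.iIndep F μ) {E : ι → Set Ω}
    {S : Finset ι} (hE : ∀ i ∈ S, MeasurableSet[F i] (E i)) {q : ℝ≥0∞}
    (hq : ∀ i ∈ S, μ (E i) ≤ q) : μ (⋂ i ∈ S, E i) ≤ q ^ S.card :=
  (hind.meas_biInter hE).trans_le (Finset.prod_le_pow_card _ _ _ hq)

theorem tsum_ofReal_pow_mul_pow_mul_rpow_ne_top {x q c a : ℝ} {f : ℕ} (hx : 0 < x)
    (hq : 0 ≤ q) (hc : 0 ≤ c) (hlt : x ^ f * q < x ^ a) (k : ℕ) :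
    ∑' n : ℕ, ENNReal.ofReal ((x ^ (k + n)) ^ f * q ^ (n + 1) * (c / x ^ (k + n)) ^ a) ≠ ∞ := by
  set B := x ^ f * q / x ^ a
  have hB : B < 1 := (div_lt_one (Real.rpow_pos_of_pos hx a)).2 hlt
  have hterm : ∀ n : ℕ, (x ^ (k + n)) ^ f * q ^ (n + 1) * (c / x ^ (k + n)) ^ a =
      (x ^ k) ^ f * q * (c / x ^ k) ^ a * B ^ n := by
    intro n
    rw [pow_add, ← div_div, Real.div_rpow (by positivity) (by positivity),
      ← Real.rpow_pow_comm hx.le]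
    simp only [B, div_pow, mul_pow, ← pow_mul]
    field_simp
    ring
  have hsum : Summable fun n : ℕ => (x ^ (k + n)) ^ f * q ^ (n + 1) * (c / x ^ (k + n)) ^ a := by
    simp_rw [hterm]
    exact (summable_geometric_of_lt_one (by positivity) hB).mul_left _
  rw [← ENNReal.ofReal_tsum_of_nonneg (fun n => by positivity) hsum]
  exact ENNReal.ofReal_ne_top

theorem pow_mul_two_pow_mul_le {N d e f : ℕ} (hN : 2 ≤ N) (hef : f + e = d) {t : ℝ}
    (ht : 0 ≤ t) : (N : ℝ) ^ f * (2 ^ e * t) ≤ t * (N : ℝ) ^ d := by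
  have h2N : (2 : ℝ) ^ e ≤ (N : ℝ) ^ e := pow_le_pow_left₀ (by norm_num) (by exact_mod_cast hN) e
  calc (N : ℝ) ^ f * (2 ^ e * t) ≤ (N : ℝ) ^ f * ((N : ℝ) ^ e * t) := by gcongr
    _ = t * (N : ℝ) ^ d := by rw [← hef, pow_add]; ring

theorem lt_rpow_log_div_log_add {b y ε : ℝ} (hb : 1 < b) (hy : 0 < y) (hε : 0 < ε) :
    y < b ^ (Real.log y / Real.log b + ε) := by
  rw [Real.log_div_log, Real.rpow_add (by linarith), Real.rpow_logb (by linarith) hb.ne' hy]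
  exact lt_mul_of_one_lt_right hy (Real.one_lt_rpow hb hε)

theorem dist_le_sqrt_card_mul {d : ℕ} {x y : Euc d} {ε : ℝ} (hε : 0 ≤ ε)
    (h : ∀ i, |x i - y i| ≤ ε) : dist x y ≤ √d * ε := by
  rw [EuclideanSpace.dist_eq, ← Real.sqrt_sq hε, ← Real.sqrt_mul (Nat.cast_nonneg d)]
  refine Real.sqrt_le_sqrt ?_
  calc ∑ i, dist (x i) (y i) ^ 2 ≤ ∑ _i : Fin d, ε ^ 2 :=
        Finset.sum_le_sum fun i _ => pow_le_pow_left₀ (abs_nonneg _) (h i) 2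
    _ = d * ε ^ 2 := by simp

theorem mem_Icc_floor_mul_div {y M : ℝ} (hy : 0 ≤ y) (hM : 0 < M) :
    y ∈ Icc (⌊y * M⌋₊ / M) ((⌊y * M⌋₊ + 1) / M) :=
  ⟨(div_le_iff₀ hM).2 (Nat.floor_le (by positivity)),
    (le_div_iff₀ hM).2 (Nat.lt_floor_add_one _).le⟩

theorem card_filter_mem_Icc_le_two (K : ℕ) {M y : ℝ} (hM : 0 < M) :
    #{w : Fin K | y ∈ Icc ((w : ℝ) / M) ((w + 1) / M)} ≤ 2 := by
  classical
  refine (Finset.card_le_card_of_injOn (fun w : Fin K => (w : ℕ))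
    (t := {⌊y * M⌋₊ - 1, ⌊y * M⌋₊}) (fun w hw => ?_) Fin.val_injective.injOn).trans
    Finset.card_le_two
  simp only [Finset.coe_filter, Finset.mem_univ, true_and, mem_ofPred_eq, mem_Icc,
    div_le_iff₀ hM, le_div_iff₀ hM] at hw
  have h1 : (w : ℕ) ≤ ⌊y * M⌋₊ := Nat.le_floor hw.1
  have h2 : ⌊y * M⌋₊ ≤ (w : ℕ) + 1 := Nat.floor_le_of_le (by exact_mod_cast hw.2)
  simp only [Finset.coe_insert, Finset.coe_singleton, mem_insert_iff, mem_singleton_iff]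
  omega

section Classes

variable {d N : ℕ}

def IsNAdic (N : ℕ) (y : ℝ) : Prop := ∃ b s : ℕ, y = b / (N : ℝ) ^ s

/-- `c i = none` marks a coordinate that is not `N`-adic, `c i = some (b, s)` one equal to
`b / N ^ s`. -/
def classSet (N : ℕ) (c : Fin d → Option (ℕ × ℕ)) : Set (Euc d) :=
  {x | ∀ i, (c i).elim (¬ IsNAdic N (x i)) fun bs => x i = bs.1 / (N : ℝ) ^ bs.2}

/-- The points of `classSet N c` whose non-`N`-adic coordinates lie in the level-`K` grid
intervals indexed by `key`. -/
def classBox (N : ℕ) (c : Fin d → Option (ℕ × ℕ)) (K : ℕ) (key : Fin d → ℕ) : Set (Euc d) :=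
  {x | ∀ i, (c i).elim (¬ IsNAdic N (x i) ∧
      x i ∈ Icc (key i / (N : ℝ) ^ K) ((key i + 1) / (N : ℝ) ^ K))
    fun bs => x i = bs.1 / (N : ℝ) ^ bs.2}

/-- Keys vanish at the `N`-adic coordinates, which the class already pins down. -/
def classKeys (N : ℕ) (c : Fin d → Option (ℕ × ℕ)) (K : ℕ) : Finset (Fin d → ℕ) :=
  Fintype.piFinset fun i => (c i).elim (Finset.range (N ^ K)) fun _ => {0}

open Classical in
def cubesMeeting (d N m : ℕ) (B : Set (Euc d)) : Finset (Fin d → Fin (N ^ m)) :=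
  Finset.univ.filter fun v => (gridCube d N m v ∩ B).Nonempty

theorem iUnion_classSet (N d : ℕ) : ⋃ c : Fin d → Option (ℕ × ℕ), classSet N c = univ := by
  classical
  refine eq_univ_of_forall fun x => mem_iUnion.2 ?_
  have hcoord : ∀ i, ∃ o : Option (ℕ × ℕ),
      o.elim (¬ IsNAdic N (x i)) fun bs => x i = bs.1 / (N : ℝ) ^ bs.2 := by
    intro i
    by_cases h : IsNAdic N (x i)
    · obtain ⟨b, s, hbs⟩ := h
      exact ⟨some (b, s), hbs⟩
    · exact ⟨none, h⟩
  choose c hc using hcoord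
  exact ⟨c, hc⟩

theorem card_classKeys (c : Fin d → Option (ℕ × ℕ)) (K : ℕ) :
    (classKeys N c K).card = (N ^ K) ^ #{i | ¬ (c i).isSome} := by
  classical
  rw [classKeys, Fintype.card_piFinset]
  calc ∏ i, ((c i).elim (Finset.range (N ^ K)) fun _ => {0}).card
      = ∏ i, if (c i).isSome then 1 else N ^ K :=
        Finset.prod_congr rfl fun i _ => by cases c i <;> simp
    _ = _ := by rw [Finset.prod_ite]; simp

theorem ediam_classBox_le (hN : 0 < N) (c : Fin d → Option (ℕ × ℕ)) (K : ℕ)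
    (key : Fin d → ℕ) :
    Metric.ediam (classBox N c K key) ≤ ENNReal.ofReal (√d / (N : ℝ) ^ K) := by
  refine Metric.ediam_le fun x hx y hy => ?_
  rw [edist_dist, div_eq_mul_inv]
  refine ENNReal.ofReal_le_ofReal (dist_le_sqrt_card_mul (by positivity) fun i => ?_)
  have hx := hx i
  have hy := hy i
  cases hci : c i with
  | none =>
    simp only [hci, Option.elim] at hx hy
    have hlen : (key i + 1 : ℝ) / (N : ℝ) ^ K = key i / (N : ℝ) ^ K + ((N : ℝ) ^ K)⁻¹ := by
      field_simp
    rw [abs_sub_le_iff]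
    constructor <;> linarith [hx.2.1, hx.2.2, hy.2.1, hy.2.2]
  | some bs =>
    simp only [hci, Option.elim] at hx hy
    simp [hx, hy]

theorem mem_Icc_of_mem_gridCube (hN : 0 < N) {n : ℕ} {l : Fin d → Fin (N ^ n)} {x : Euc d}
    (hx : x ∈ gridCube d N n l) (i : Fin d) : x i ∈ Icc 0 1 := by
  have hNn : (0 : ℝ) < (N : ℝ) ^ n := by positivity
  have hl : ((l i : ℕ) : ℝ) + 1 ≤ (N : ℝ) ^ n := by exact_mod_cast (l i).isLt
  exact ⟨(by positivity : (0 : ℝ) ≤ (l i : ℕ) / (N : ℝ) ^ n).trans (hx i).1,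
    (hx i).2.trans ((div_le_one hNn).2 hl)⟩

theorem floor_mul_pow_eq_of_mem_Icc (hN : 0 < N) {y : ℝ} (hy : ¬ IsNAdic N y) {m w : ℕ}
    (h : y ∈ Icc (w / (N : ℝ) ^ m) ((w + 1) / (N : ℝ) ^ m)) : ⌊y * (N : ℝ) ^ m⌋₊ = w := by
  have hNm : (0 : ℝ) < (N : ℝ) ^ m := by positivity
  have hlt : y < (w + 1) / (N : ℝ) ^ m :=
    h.2.lt_of_ne fun he => hy ⟨w + 1, m, by rw [he]; push_cast; rfl⟩
  rw [Nat.floor_eq_iff (mul_nonneg ((by positivity : (0 : ℝ) ≤ w / (N : ℝ) ^ m).trans h.1)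
    hNm.le)]
  exact ⟨(div_le_iff₀ hNm).1 h.1, (lt_div_iff₀ hNm).1 hlt⟩

theorem floor_mul_pow_eq_div (hN : 0 < N) {y : ℝ} {m K : ℕ} (hmK : m ≤ K) :
    ⌊y * (N : ℝ) ^ m⌋₊ = ⌊y * (N : ℝ) ^ K⌋₊ / N ^ (K - m) := by
  rw [← Nat.floor_div_natCast, Nat.cast_pow, ← Nat.sub_add_cancel hmK, pow_add,
    Nat.add_sub_cancel, mul_comm ((N : ℝ) ^ (K - m)), ← mul_assoc,
    mul_div_cancel_right₀ _ (by positivity)]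

theorem card_cubesMeeting_classBox_le (hN : 0 < N) (c : Fin d → Option (ℕ × ℕ)) {m K : ℕ}
    (hmK : m ≤ K) (key : Fin d → ℕ) :
    (cubesMeeting d N m (classBox N c K key)).card ≤ 2 ^ #{i | (c i).isSome} := by
  classical
  set coordCubes : Fin d → Finset (Fin (N ^ m)) := fun i => Finset.univ.filter fun w =>
    ∃ x ∈ classBox N c K key, x i ∈ Icc ((w : ℝ) / (N : ℝ) ^ m) ((w + 1) / (N : ℝ) ^ m)
  have hsub : cubesMeeting d N m (classBox N c K key) ⊆ Fintype.piFinset coordCubes := by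
    intro v hv
    obtain ⟨x, hxv, hxB⟩ := (Finset.mem_filter.1 hv).2
    exact Fintype.mem_piFinset.2 fun i =>
      Finset.mem_filter.2 ⟨Finset.mem_univ _, x, hxB, hxv i⟩
  have hcoord : ∀ i, (coordCubes i).card ≤ if (c i).isSome then 2 else 1 := by
    intro i
    cases hci : c i with
    | none =>
      have hidx : ∀ u ∈ coordCubes i, (u : ℕ) = key i / N ^ (K - m) := by
        intro u hu
        obtain ⟨x, hxB, hxu⟩ := (Finset.mem_filter.1 hu).2
        have hxi := hxB i
        simp only [hci, Option.elim] at hxi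
        rw [← floor_mul_pow_eq_of_mem_Icc hN hxi.1 hxu, ← floor_mul_pow_eq_of_mem_Icc hN hxi.1
          (m := K) (w := key i) hxi.2, floor_mul_pow_eq_div hN hmK]
      exact Finset.card_le_one.2 fun w hw w' hw' =>
        Fin.val_injective ((hidx w hw).trans (hidx w' hw').symm)
    | some bs =>
      refine (Finset.card_le_card fun w hw => ?_).trans
        (card_filter_mem_Icc_le_two (N ^ m) (y := bs.1 / (N : ℝ) ^ bs.2)
          (M := (N : ℝ) ^ m) (by positivity))
      obtain ⟨x, hxB, hxw⟩ := (Finset.mem_filter.1 hw).2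
      have hxi := hxB i
      simp only [hci, Option.elim] at hxi
      exact Finset.mem_filter.2 ⟨Finset.mem_univ _, hxi ▸ hxw⟩
  calc (cubesMeeting d N m (classBox N c K key)).card
      ≤ ∏ i, (coordCubes i).card := by
        rw [← Fintype.card_piFinset]; exact Finset.card_le_card hsub
    _ ≤ ∏ i, if (c i).isSome then 2 else 1 := Finset.prod_le_prod' fun i _ => hcoord i
    _ = 2 ^ #{i | (c i).isSome} := by rw [Finset.prod_ite]; simp

end Classes

section Selection

variable {d N : ℕ} (A : (n : ℕ) → Omega d N → (Fin d → Fin (N ^ n)) → Bool)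
  (r : (n : ℕ) → (Fin d → Fin (N ^ n)) → (Fin d → Fin (N ^ n)) → Prop)

def selectedEvent (m : ℕ) (v : Fin d → Fin (N ^ m)) : Set (Omega d N) :=
  {ω | ∃ l', r m l' v ∧ A m ω l' = true}

def selectedMeets (m : ℕ) (B : Set (Euc d)) : Set (Omega d N) :=
  ⋃ v ∈ cubesMeeting d N m B, selectedEvent A r m v

def selectedMeetsThroughout (k K : ℕ) (B : Set (Euc d)) : Set (Omega d N) :=
  ⋂ m ∈ Finset.Icc k K, selectedMeets A r m B

/-- The paper's `Ẽ^k(ω)`. -/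
def tailSelected (k : ℕ) (ω : Omega d N) : Set (Euc d) :=
  ⋂ n ∈ {m : ℕ | k ≤ m}, ⋃ l : Fin d → Fin (N ^ n),
    ⋃ _ : ∃ l', r n l' l ∧ A n ω l' = true, gridCube d N n l

variable {A r}

theorem measurableSet_selectedMeets {F : MeasurableSpace (Omega d N)} {m : ℕ}
    (hmeas : ∀ l, Measurable[F] fun ω => A m ω l) (B : Set (Euc d)) :
    MeasurableSet[F] (selectedMeets A r m B) := by
  refine Finset.measurableSet_biUnion _ fun v _ => ?_
  have hrw : selectedEvent A r m v = ⋃ l', ⋃ _ : r m l' v, (fun ω => A m ω l') ⁻¹' {true} := by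
    ext ω; simp [selectedEvent]
  rw [hrw]
  exact MeasurableSet.iUnion fun l' => MeasurableSet.iUnion fun _ =>
    hmeas l' (measurableSet_singleton true)

theorem measure_selectedEvent_le (μ : Measure (Omega d N)) {m M1 : ℕ} {ε : ℝ≥0∞}
    (hA : ∀ l, μ {ω | A m ω l = true} ≤ ε) (v : Fin d → Fin (N ^ m))
    (hcard : ({l' | r m l' v}).ncard ≤ M1) :
    μ (selectedEvent A r m v) ≤ M1 * ε := by
  classical
  have hsub : selectedEvent A r m v ⊆
      ⋃ l' ∈ Finset.univ.filter (r m · v), {ω | A m ω l' = true} :=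
    fun ω ⟨l', hr, hA⟩ => mem_iUnion₂.2 ⟨l', by simpa using hr, hA⟩
  have hcard' : #(Finset.univ.filter (r m · v)) ≤ M1 := by
    rwa [← Set.ncard_coe_finset, Finset.coe_filter_univ]
  calc μ (selectedEvent A r m v)
      ≤ ∑ l' ∈ Finset.univ.filter (r m · v), μ {ω | A m ω l' = true} :=
        (measure_mono hsub).trans (measure_biUnion_finset_le _ _)
    _ ≤ #(Finset.univ.filter (r m · v)) * ε := by
        simpa using Finset.sum_le_card_nsmul _ _ ε fun l' _ => hA l'
    _ ≤ M1 * ε := by gcongr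

theorem measure_selectedMeets_le (μ : Measure (Omega d N)) {m M1 : ℕ} {ε : ℝ≥0∞}
    (hA : ∀ l, μ {ω | A m ω l = true} ≤ ε) (hcard : ∀ v, ({l' | r m l' v}).ncard ≤ M1)
    (B : Set (Euc d)) :
    μ (selectedMeets A r m B) ≤ (cubesMeeting d N m B).card * (M1 * ε) :=
  (measure_biUnion_finset_le _ _).trans <| by
    simpa using Finset.sum_le_card_nsmul _ _ _ fun v _ =>
      measure_selectedEvent_le μ hA v (hcard v)

theorem measure_selectedMeetsThroughout_classBox_le {P : Measure (Omega d N)}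
    {F : ℕ → MeasurableSpace (Omega d N)} (hN : 0 < N) (hind : ProbabilityTheory.iIndep F P)
    (hmeas : ∀ n l, Measurable[F n] fun ω => A n ω l) {ε : ℝ≥0∞}
    (hA : ∀ n l, P {ω | A n ω l = true} ≤ ε) {M1 : ℕ}
    (hcard : ∀ n l, ({l' | r n l' l}).ncard ≤ M1) (c : Fin d → Option (ℕ × ℕ))
    (k n : ℕ) (key : Fin d → ℕ) :
    P (selectedMeetsThroughout A r k (k + n) (classBox N c (k + n) key)) ≤
      (2 ^ #{i | (c i).isSome} * (M1 * ε)) ^ (n + 1) := by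
  have hIcc : (Finset.Icc k (k + n)).card = n + 1 := by simp; omega
  rw [← hIcc]
  refine measure_biInter_le_pow_card hind
    (fun m _ => measurableSet_selectedMeets (hmeas m) _) fun m hm => ?_
  refine (measure_selectedMeets_le P (hA m) (hcard m) _).trans (mul_le_mul_left ?_ _)
  exact_mod_cast card_cubesMeeting_classBox_le hN c (Finset.mem_Icc.1 hm).2 key

theorem sum_measure_selectedMeetsThroughout_classBox_le {P : Measure (Omega d N)}
    {F : ℕ → MeasurableSpace (Omega d N)} (hN : 0 < N) (hind : ProbabilityTheory.iIndep F P)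
    (hmeas : ∀ n l, Measurable[F n] fun ω => A n ω l) {ρ : ℝ} (hρ0 : 0 ≤ ρ)
    (hA : ∀ n l, P {ω | A n ω l = true} ≤ ENNReal.ofReal ρ) {M1 : ℕ}
    (hcard : ∀ n l, ({l' | r n l' l}).ncard ≤ M1) (c : Fin d → Option (ℕ × ℕ)) (k n : ℕ) :
    ∑ key ∈ classKeys N c (k + n),
        P (selectedMeetsThroughout A r k (k + n) (classBox N c (k + n) key)) ≤
      ENNReal.ofReal (((N : ℝ) ^ (k + n)) ^ #{i | ¬ (c i).isSome} *
        (2 ^ #{i | (c i).isSome} * (M1 * ρ)) ^ (n + 1)) := by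
  calc _ ≤ (classKeys N c (k + n)).card *
        (2 ^ #{i | (c i).isSome} * (M1 * ENNReal.ofReal ρ)) ^ (n + 1) := by
        simpa using Finset.sum_le_card_nsmul _ _ _ fun key _ =>
          measure_selectedMeetsThroughout_classBox_le hN hind hmeas hA hcard c k n key
    _ = _ := by
        rw [card_classKeys, ENNReal.ofReal_mul (by positivity), ENNReal.ofReal_pow (by positivity),
          ENNReal.ofReal_pow (by positivity), ENNReal.ofReal_pow (by positivity),
          ENNReal.ofReal_mul (by positivity), ENNReal.ofReal_pow (by positivity),
          ENNReal.ofReal_mul (by positivity)]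
        simp

theorem tailSelected_inter_classSet_subset (hN : 0 < N) (c : Fin d → Option (ℕ × ℕ))
    (k K : ℕ) (ω : Omega d N) :
    tailSelected A r k ω ∩ classSet N c ⊆
      ⋃ key ∈ classKeys N c K,
        ⋃ _ : ω ∈ selectedMeetsThroughout A r k K (classBox N c K key), classBox N c K key := by
  classical
  rintro x ⟨hxT, hxc⟩
  have hlevel : ∀ m, k ≤ m → ∃ v, ω ∈ selectedEvent A r m v ∧ x ∈ gridCube d N m v := by
    intro m hm
    simpa [selectedEvent] using mem_iInter₂.1 hxT m hm
  obtain ⟨v, -, hxv⟩ := hlevel k le_rfl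
  have hNK : (0 : ℝ) < (N : ℝ) ^ K := by positivity
  set key : Fin d → ℕ := fun i => (c i).elim ⌊x i * (N : ℝ) ^ K⌋₊ fun _ => 0
  have hbox : x ∈ classBox N c K key := by
    intro i
    have hxi := hxc i
    cases hci : c i with
    | none =>
      simp only [hci, Option.elim, key] at hxi ⊢
      exact ⟨hxi, mem_Icc_floor_mul_div (mem_Icc_of_mem_gridCube hN hxv i).1 hNK⟩
    | some bs => simpa [hci] using hxi
  have hkey : key ∈ classKeys N c K := by
    refine Fintype.mem_piFinset.2 fun i => ?_
    have hxi := hxc i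
    cases hci : c i with
    | none =>
      simp only [hci, Option.elim, key, Finset.mem_range] at hxi ⊢
      have hx01 := mem_Icc_of_mem_gridCube hN hxv i
      -- `1 = 1 / N ^ 0` is `N`-adic.
      have hlt : x i < 1 := hx01.2.lt_of_ne fun h => hxi ⟨1, 0, by simp [h]⟩
      rw [Nat.floor_lt (mul_nonneg hx01.1 hNK.le)]
      push_cast
      nlinarith
    | some bs => simp [hci, key]
  refine mem_iUnion₂.2 ⟨key, hkey, mem_iUnion.2 ⟨mem_iInter₂.2 fun m hm => ?_, hbox⟩⟩
  obtain ⟨w, hw, hxw⟩ := hlevel m (Finset.mem_Icc.1 hm).1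
  exact mem_iUnion₂.2 ⟨w, Finset.mem_filter.2 ⟨Finset.mem_univ _, x, hxw, hbox⟩, hw⟩

theorem ae_hausdorffMeasure_tailSelected_inter_classSet_eq_zero {P : Measure (Omega d N)}
    {F : ℕ → MeasurableSpace (Omega d N)} (hN : 2 ≤ N) (hind : ProbabilityTheory.iIndep F P)
    (hmeas : ∀ n l, Measurable[F n] fun ω => A n ω l) {ρ : ℝ} (hρ0 : 0 ≤ ρ)
    (hA : ∀ n l, P {ω | A n ω l = true} ≤ ENNReal.ofReal ρ) {M1 : ℕ}
    (hcard : ∀ n l, ({l' | r n l' l}).ncard ≤ M1) (c : Fin d → Option (ℕ × ℕ)) (k : ℕ)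
    {a : ℝ} (ha : 0 < a) (hlt : (M1 : ℝ) * ρ * (N : ℝ) ^ d < (N : ℝ) ^ a) :
    ∀ᵐ ω ∂P, μH[a] (tailSelected A r k ω ∩ classSet N c) = 0 := by
  have hN0 : 0 < N := by omega
  have hδ : Tendsto (fun n : ℕ => ENNReal.ofReal (√d / (N : ℝ) ^ (k + n))) atTop (𝓝 0) := by
    have hpow : Tendsto (fun n : ℕ => (N : ℝ) ^ (k + n)) atTop atTop := by
      simpa only [add_comm, Function.comp_def] using
        (tendsto_pow_atTop_atTop_of_one_lt (by exact_mod_cast hN)).comp (tendsto_add_atTop_nat k)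
    simpa using ENNReal.tendsto_ofReal (tendsto_const_nhds.div_atTop hpow)
  have hcount := Finset.card_filter_add_card_filter_not (s := Finset.univ)
    fun i : Fin d => (c i).isSome
  rw [Finset.card_univ, Fintype.card_fin, add_comm] at hcount
  have hratio := (pow_mul_two_pow_mul_le hN hcount (by positivity)).trans_lt hlt
  refine ae_hausdorffMeasure_eq_zero_of_tsum_ne_top P _ (fun n => classKeys N c (k + n))
    (fun n => classBox N c (k + n))
    (fun n key => selectedMeetsThroughout A r k (k + n) (classBox N c (k + n) key))
    _ ha hδ (fun n => ediam_classBox_le hN0 c (k + n))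
    (fun ω n => tailSelected_inter_classSet_subset hN0 c k (k + n) ω) ?_
  refine ne_top_of_le_ne_top (tsum_ofReal_pow_mul_pow_mul_rpow_ne_top (Nat.cast_pos.2 hN0)
    (by positivity) (Real.sqrt_nonneg d) hratio k) (ENNReal.tsum_le_tsum fun n => ?_)
  rw [ENNReal.ofReal_mul (by positivity), ← ENNReal.ofReal_rpow_of_nonneg (by positivity) ha.le]
  exact mul_le_mul_left
    (sum_measure_selectedMeetsThroughout_classBox_le hN0 hind hmeas hρ0 hA hcard c k n) _

end Selection

end FracPerc

theorem dimH_selected_cubes_le_general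
    (d N : ℕ) (hN : 2 ≤ N)
    (P : Measure (Omega d N))
    (F : ℕ → MeasurableSpace (Omega d N))
    (hind : ProbabilityTheory.iIndep F P)
    (A : (n : ℕ) → Omega d N → (Fin d → Fin (N ^ n)) → Bool)
    (hmeas : ∀ (n : ℕ) (l : Fin d → Fin (N ^ n)), Measurable[F n] fun ω => A n ω l)
    (ρ : ℝ) (hρ0 : 0 ≤ ρ)
    (hA : ∀ (n : ℕ) (l : Fin d → Fin (N ^ n)), P {ω | A n ω l = true} ≤ ENNReal.ofReal ρ)
    (M1 : ℕ) (r : (n : ℕ) → (Fin d → Fin (N ^ n)) → (Fin d → Fin (N ^ n)) → Prop)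
    (hcard : ∀ (n : ℕ) (l : Fin d → Fin (N ^ n)), ({l' | r n l' l}).ncard ≤ M1) :
    ∀ k : ℕ, ∀ᵐ ω ∂P,
      dimH (⋂ n ∈ {m : ℕ | k ≤ m}, ⋃ l : Fin d → Fin (N ^ n),
          ⋃ _ : ∃ l', r n l' l ∧ A n ω l' = true, gridCube d N n l) ≤
        ENNReal.ofReal (Real.log (max ((M1 : ℝ) * ρ * (N : ℝ) ^ d) 1) / Real.log N) := by
  intro k
  have hN1 : (1 : ℝ) < N := by exact_mod_cast hN
  have hs : 0 ≤ Real.log (max ((M1 : ℝ) * ρ * (N : ℝ) ^ d) 1) / Real.log N :=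
    div_nonneg (Real.log_nonneg (le_max_right _ _)) (Real.log_nonneg hN1.le)
  have hnull : ∀ c (j : ℕ), ∀ᵐ ω ∂P,
      μH[Real.log (max ((M1 : ℝ) * ρ * (N : ℝ) ^ d) 1) / Real.log N + 1 / (j + 1)]
        (tailSelected A r k ω ∩ classSet N c) = 0 := fun c j =>
    ae_hausdorffMeasure_tailSelected_inter_classSet_eq_zero hN hind hmeas hρ0 hA hcard c k
      (by positivity) ((le_max_left _ 1).trans_lt
        (lt_rpow_log_div_log_add hN1 (by positivity) (by positivity)))
  filter_upwards [ae_all_iff.2 fun c => ae_all_iff.2 (hnull c)] with ω hω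
  refine dimH_le_of_forall_hausdorffMeasure_eq_zero hs fun j => measure_mono_null ?_
    (measure_iUnion_null fun c => hω c j)
  intro x hx
  obtain ⟨c, hc⟩ := mem_iUnion.1 (iUnion_classSet N d ▸ mem_univ x)
  exact mem_iUnion.2 ⟨c, hx, hc⟩

/-- (Supermartingale dimension bound.) -/
theorem dimH_selected_cubes_le
    (d N : ℕ) (hd : 2 ≤ d) (hN : 2 ≤ N) (p : ℝ) (hp0 : 0 ≤ p) (hp1 : p ≤ 1)
    (P : Measure (Omega d N)) (hP : IsPercMeasure d N p P)
    (F : ℕ → MeasurableSpace (Omega d N))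
    (hsub : ∀ (n : ℕ) (s : Set (Omega d N)), MeasurableSet[F n] s → NullMeasurableSet s P)
    (hind : ProbabilityTheory.iIndep F P)
    (A : (n : ℕ) → Omega d N → (Fin d → Fin (N ^ n)) → Bool)
    (hmeas : ∀ (n : ℕ) (l : Fin d → Fin (N ^ n)), Measurable[F n] fun ω => A n ω l)
    (ρ : ℝ) (hρ0 : 0 ≤ ρ) (hρ1 : ρ ≤ 1)
    (hA : ∀ (n : ℕ) (l : Fin d → Fin (N ^ n)), P {ω | A n ω l = true} ≤ ENNReal.ofReal ρ)
    (M1 : ℕ) (r : (n : ℕ) → (Fin d → Fin (N ^ n)) → (Fin d → Fin (N ^ n)) → Prop)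
    (hrefl : ∀ (n : ℕ) (l : Fin d → Fin (N ^ n)), r n l l)
    (hcard : ∀ (n : ℕ) (l : Fin d → Fin (N ^ n)), ({l' | r n l' l}).ncard ≤ M1) :
    ∀ k : ℕ, ∀ᵐ ω ∂P,
      dimH (⋂ n ∈ {m : ℕ | k ≤ m}, ⋃ l : Fin d → Fin (N ^ n),
          ⋃ _ : ∃ l', r n l' l ∧ A n ω l' = true, gridCube d N n l) ≤
        ENNReal.ofReal (Real.log (max ((M1 : ℝ) * ρ * (N : ℝ) ^ d) 1) / Real.log N) :=
  dimH_selected_cubes_le_general d N hN P F hind A hmeas ρ hρ0 hA M1 r hcard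
end
end

section
/- Let γ : I → ℝ^d be an α-Hölder curve for some 0 < α ≤ 1. Then there is a countable collection of curves γ_i : I → ℝ^d, i ∈ ℕ, such that each γ_i is (i,α)-Hölder and γ(I) ⊂ ⋃_{i=1}^∞ γ_i(I). -/
open MeasureTheory Set
open scoped ENNReal NNReal

noncomputable section

open FracPerc

/-! On the `α`-snowflake of `ℝ`, where `dist t s = |t - s| ^ α`, an `α`-Hölder curve is
Lipschitz at every point. The points of `I` at which the pointwise constant is at most `n` form a
set on which `γ` is `n`-Lipschitz, and such a restriction extends to a Lipschitz map on the whole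
snowflake (a coordinatewise McShane extension, at the cost of a constant depending only on the
target). -/

section LipschitzCover

variable {X E : Type*} [PseudoMetricSpace X] [NormedAddCommGroup E] [NormedSpace ℝ E]

theorem lipschitzOnWith_setOf_dist_le_mul {Y : Type*} [PseudoMetricSpace Y] (f : X → Y)
    (s : Set X) (n : ℕ) :
    LipschitzOnWith n f {x ∈ s | ∀ y ∈ s, dist (f x) (f y) ≤ n * dist x y} :=
  LipschitzOnWith.of_dist_le_mul fun _ hx _ hy => hx.2 _ hy.1

theorem exists_lipschitzWith_nat_cover [FiniteDimensional ℝ E] (f : X → E) (s : Set X)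
    (hf : ∀ x ∈ s, ∃ H : ℝ, ∀ y ∈ s, dist (f x) (f y) ≤ H * dist x y) :
    ∃ g : ℕ → X → E, (∀ i : ℕ, LipschitzWith i (g i)) ∧ f '' s ⊆ ⋃ i, g i '' s := by
  set C := lipschitzExtensionConstant E
  set k := ⌈(C : ℝ)⌉₊
  have hk : 0 < k := Nat.ceil_pos.2 (lipschitzExtensionConstant_pos E)
  have hG : ∀ n : ℕ, ∃ G : X → E, LipschitzWith (C * n) G ∧
      EqOn f G {x ∈ s | ∀ y ∈ s, dist (f x) (f y) ≤ n * dist x y} :=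
    fun n => (lipschitzOnWith_setOf_dist_le_mul f s n).extend_finite_dimension
  choose G hG_lip hG_eq using hG
  -- `G n` has constant `C * n`; spreading the indices by the factor `k ≥ C` brings it down to `i`.
  refine ⟨fun i => G (i / k), fun i => (hG_lip (i / k)).weaken ?_, ?_⟩
  · have : (C : ℝ) * (i / k : ℕ) ≤ i :=
      calc (C : ℝ) * (i / k : ℕ) ≤ k * (i / k : ℕ) := by gcongr; exact Nat.le_ceil _
        _ ≤ i := by exact_mod_cast Nat.mul_div_le i k
    exact_mod_cast this
  · rintro _ ⟨x, hx, rfl⟩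
    obtain ⟨H, hH⟩ := hf x hx
    have hxS : x ∈ {x ∈ s | ∀ y ∈ s, dist (f x) (f y) ≤ ⌈H⌉₊ * dist x y} :=
      ⟨hx, fun y hy => (hH y hy).trans (by gcongr; exact Nat.le_ceil H)⟩
    refine mem_iUnion.2 ⟨⌈H⌉₊ * k, x, hx, ?_⟩
    simp only [Nat.mul_div_cancel _ hk]
    exact (hG_eq _ hxS).symm

end LipschitzCover

theorem holder_cover_general
    (d : ℕ) (α : ℝ) (hα0 : 0 < α) (hα1 : α ≤ 1)
    (a b : ℝ) (γ : ℝ → Euc d)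
    (hHol : ∀ t ∈ Icc a b, ∃ H : ℝ, 0 ≤ H ∧
      ∀ s ∈ Icc a b, dist (γ t) (γ s) ≤ H * |t - s| ^ α) :
    ∃ g : ℕ → ℝ → Euc d,
      (∀ i : ℕ, ∀ t ∈ Icc a b, ∀ s ∈ Icc a b,
        dist (g i t) (g i s) ≤ (i : ℝ) * |t - s| ^ α) ∧
      γ '' Icc a b ⊆ ⋃ i : ℕ, g i '' Icc a b := by
  open Metric.Snowflaking in
  obtain ⟨g, hg_lip, hg_cover⟩ := exists_lipschitzWith_nat_cover
    (γ ∘ ofSnowflaking : Metric.Snowflaking ℝ α hα0 hα1 → Euc d) (toSnowflaking '' Icc a b)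
    (by
      rintro _ ⟨t, ht, rfl⟩
      obtain ⟨H, -, hH⟩ := hHol t ht
      exact ⟨H, by rintro _ ⟨s, hs, rfl⟩; simpa [Real.dist_eq] using hH s hs⟩)
  refine ⟨fun i => g i ∘ toSnowflaking, fun i t _ s _ => ?_, ?_⟩
  · simpa [Real.dist_eq] using (hg_lip i).dist_le_mul (toSnowflaking t) (toSnowflaking s)
  · simpa [image_image] using hg_cover

/-- An `α`-Hölder curve can be covered by countably many
`(i,α)`-Hölder curves. -/
theorem holder_cover
    (d : ℕ) (α : ℝ) (hα0 : 0 < α) (hα1 : α ≤ 1)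
    (a b : ℝ) (hab : a ≤ b) (γ : ℝ → Euc d)
    (hHol : ∀ t ∈ Icc a b, ∃ H : ℝ, 0 ≤ H ∧
      ∀ s ∈ Icc a b, dist (γ t) (γ s) ≤ H * |t - s| ^ α) :
    ∃ g : ℕ → ℝ → Euc d,
      (∀ i : ℕ, ∀ t ∈ Icc a b, ∀ s ∈ Icc a b,
        dist (g i t) (g i s) ≤ (i : ℝ) * |t - s| ^ α) ∧
      γ '' Icc a b ⊆ ⋃ i : ℕ, g i '' Icc a b :=
  holder_cover_general d α hα0 hα1 a b γ hHol
end
end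

section
/- Let γ : I → ℝ^d be an (H,α)-Hölder curve and define A_0 := ⋂_{η>0} {t ∈ I : γ is not (α,η)-tight at t}. Then H^{1/α}(γ(A_0)) = 0. -/
open MeasureTheory Set
open scoped ENNReal NNReal

noncomputable section

/-! At a point `t` where `γ` is tight for no `η`, there are arbitrarily small radii `r` with
`diam γ(B(t, r))^{1/α} ≤ ε · |B(t, r)|`. By the Besicovitch covering theorem, disjoint such balls
cover almost all of `A₀`, and their images cover the image of the rest of `A₀` with
`∑ diam^{1/α} ≤ ε · |[a - 1, b + 1]|`. Letting `ε → 0` along a sequence shows that `γ(A₀ \ Z)` is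
`H^{1/α}`-null for a Lebesgue-null set `Z`, and `γ(A₀ ∩ Z)` is `H^{1/α}`-null because an
`α`-Hölder map sends Lebesgue-null sets to `H^{1/α}`-null sets. -/

open FracPerc Filter Topology Metric Bornology

section Holder

variable {X Y : Type*}

theorem holderOnWith_of_dist_le [PseudoMetricSpace X] [PseudoMetricSpace Y] {f : X → Y}
    {s : Set X} {C r : ℝ} (hr : 0 ≤ r)
    (h : ∀ x ∈ s, ∀ y ∈ s, dist (f x) (f y) ≤ C * dist x y ^ r) :
    HolderOnWith C.toNNReal r.toNNReal f s := by
  intro x hx y hy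
  rw [edist_dist, edist_dist, Real.coe_toNNReal _ hr,
    ENNReal.ofReal_rpow_of_nonneg dist_nonneg hr]
  change ENNReal.ofReal _ ≤ ENNReal.ofReal C * _
  rw [← ENNReal.ofReal_mul' (by positivity)]
  exact ENNReal.ofReal_le_ofReal (h x hx y hy)

theorem HolderOnWith.hausdorffMeasure_image_eq_zero [EMetricSpace X] [MeasurableSpace X]
    [BorelSpace X] {f : ℝ → X} {s : Set ℝ} {C r : ℝ≥0} (h : HolderOnWith C r f s) (hr : 0 < r)
    (hs : volume s = 0) : μH[1 / (r : ℝ)] (f '' s) = 0 := by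
  have := h.hausdorffMeasure_image_le hr (by positivity : (0 : ℝ) ≤ 1 / r)
  rwa [mul_one_div_cancel (NNReal.coe_pos.2 hr).ne', hausdorffMeasure_real, hs, mul_zero,
    nonpos_iff_eq_zero] at this

end Holder

section Covering

theorem hausdorffMeasure_eq_zero_of_tendsto_tsum {X ι : Type*} [EMetricSpace X]
    [MeasurableSpace X] [BorelSpace X] {κ : ι → Type*} [∀ n, Countable (κ n)] {l : Filter ι}
    [l.NeBot] {S : Set X} {s : ℝ} (hs : 0 < s) (t : ∀ n, κ n → Set X)
    (hcover : ∀ᶠ n in l, S ⊆ ⋃ i, t n i)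
    (hsum : Tendsto (fun n => ∑' i, ediam (t n i) ^ s) l (𝓝 0)) : μH[s] S = 0 := by
  set σ := fun n => ∑' i, ediam (t n i) ^ s
  have hdiam : ∀ n i, ediam (t n i) ≤ σ n ^ s⁻¹ := fun n i =>
    calc ediam (t n i) = (ediam (t n i) ^ s) ^ s⁻¹ := (ENNReal.rpow_rpow_inv hs.ne' _).symm
      _ ≤ σ n ^ s⁻¹ := ENNReal.rpow_le_rpow (ENNReal.le_tsum i) (inv_nonneg.2 hs.le)
  have hσ : Tendsto (fun n => σ n ^ s⁻¹) l (𝓝 0) := by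
    simpa [ENNReal.zero_rpow_of_pos (inv_pos.2 hs)] using hsum.ennrpow_const s⁻¹
  refine le_antisymm ?_ zero_le
  calc μH[s] S ≤ liminf σ l :=
        Measure.hausdorffMeasure_le_liminf_tsum s S _ hσ t (Eventually.of_forall hdiam) hcover
    _ = 0 := hsum.liminf_eq

variable {β X : Type*} [MetricSpace β] [SecondCountableTopology β] [MeasurableSpace β]
  [OpensMeasurableSpace β] [HasBesicovitchCovering β]

theorem exists_disjoint_covering_ae_tsum_ediam_image_rpow_le [PseudoEMetricSpace X]
    (μ : Measure β) [SFinite μ] {f : β → X} {A : Set β} {s : ℝ} {ε : ℝ≥0∞}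
    (hf : ∀ x ∈ A, ∀ δ > 0, ∃ r ∈ Ioo 0 δ,
      ediam (f '' (closedBall x r ∩ A)) ^ s ≤ ε * μ (closedBall x r)) :
    ∃ (t : Set β) (r : β → ℝ), t.Countable ∧ μ (A \ ⋃ x ∈ t, closedBall x (r x)) = 0 ∧
      ∑' x : t, ediam (f '' (closedBall x (r x) ∩ A)) ^ s ≤ ε * μ (cthickening 1 A) := by
  obtain ⟨t, r, ht, htA, hr, hnull, hdisj⟩ := Besicovitch.exists_disjoint_closedBall_covering_ae μ
    (fun x => {r | ediam (f '' (closedBall x r ∩ A)) ^ s ≤ ε * μ (closedBall x r)}) A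
    (fun x hx δ hδ => let ⟨r, hr, hle⟩ := hf x hx δ hδ; ⟨r, hle, hr⟩) (fun _ => 1)
    (fun _ _ => one_pos)
  have := ht.to_subtype
  refine ⟨t, r, ht, hnull, ?_⟩
  calc ∑' x : t, ediam (f '' (closedBall x (r x) ∩ A)) ^ s
      ≤ ∑' x : t, ε * μ (closedBall x (r x)) := ENNReal.tsum_le_tsum fun x => (hr x x.2).1
    _ = ε * μ (⋃ x ∈ t, closedBall x (r x)) := by
      rw [ENNReal.tsum_mul_left, measure_biUnion ht hdisj fun _ _ => measurableSet_closedBall]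
    _ ≤ ε * μ (cthickening 1 A) := by
      gcongr
      exact iUnion₂_subset fun x hx =>
        (closedBall_subset_cthickening (htA hx) _).trans (cthickening_mono (hr x hx).2.2.le _)

theorem exists_measure_eq_zero_hausdorffMeasure_image_diff_eq_zero [ProperSpace β]
    [EMetricSpace X] [MeasurableSpace X] [BorelSpace X] (μ : Measure β)
    [IsFiniteMeasureOnCompacts μ] {f : β → X} {A : Set β} {s : ℝ} (hs : 0 < s)
    (hA : IsBounded A)
    (hf : ∀ ε : ℝ≥0, 0 < ε → ∀ x ∈ A, ∀ δ > 0, ∃ r ∈ Ioo 0 δ,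
      ediam (f '' (closedBall x r ∩ A)) ^ s ≤ ε * μ (closedBall x r)) :
    ∃ Z, μ Z = 0 ∧ μH[s] (f '' (A \ Z)) = 0 := by
  set ε : ℕ → ℝ≥0 := fun n => 1 / (n + 1)
  choose t r ht hnull hsum using fun n =>
    exists_disjoint_covering_ae_tsum_ediam_image_rpow_le μ (hf (ε n) (by positivity))
  have := fun n => (ht n).to_subtype
  refine ⟨⋃ n, A \ ⋃ x ∈ t n, closedBall x (r n x), measure_iUnion_null hnull, ?_⟩
  refine hausdorffMeasure_eq_zero_of_tendsto_tsum hs (l := atTop)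
    (fun n (x : t n) => f '' (closedBall x (r n x) ∩ A)) (Eventually.of_forall fun n => ?_) ?_
  · rintro _ ⟨y, ⟨hyA, hyZ⟩, rfl⟩
    obtain ⟨x, hx, hyx⟩ : ∃ x ∈ t n, y ∈ closedBall x (r n x) := by
      by_contra! h
      exact hyZ (mem_iUnion.2 ⟨n, hyA, by simpa using h⟩)
    exact mem_iUnion.2 ⟨⟨x, hx⟩, y, ⟨hyx, hyA⟩, rfl⟩
  · have hC : μ (cthickening 1 A) ≠ ∞ := hA.cthickening.measure_lt_top.ne
    have hlim : Tendsto (fun n => (ε n : ℝ≥0∞) * μ (cthickening 1 A)) atTop (𝓝 0) := by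
      simpa only [ENNReal.coe_zero, zero_mul] using ENNReal.Tendsto.mul_const
        (ENNReal.tendsto_coe.2 tendsto_one_div_add_atTop_nhds_zero_nat) (Or.inr hC)
    exact tendsto_of_tendsto_of_tendsto_of_le_of_le tendsto_const_nhds hlim (fun _ => zero_le)
      hsum

end Covering

theorem exists_ediam_image_rpow_le_of_not_tightAt {d : ℕ} {γ : ℝ → Euc d} {I : Set ℝ}
    {α t : ℝ} (hα : 0 < α) (hbd : IsBounded (γ '' I))
    (ht : ∀ η : ℝ, 0 < η → ¬ ∃ R : ℝ, 0 < R ∧ TightAt d γ I α η R t) {ε : ℝ≥0} (hε : 0 < ε)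
    {δ : ℝ} (hδ : 0 < δ) :
    ∃ r ∈ Ioo 0 δ, ediam (γ '' (closedBall t r ∩ I)) ^ (1 / α) ≤ ε * volume (closedBall t r) := by
  obtain ⟨r, hr0, hrδ, hsmall⟩ : ∃ r, 0 < r ∧ r ≤ δ / 2 ∧
      diam (γ '' (Icc (t - r) (t + r) ∩ I)) < (ε : ℝ) ^ α * (2 * r) ^ α := by
    have := ht ((ε : ℝ) ^ α) (by positivity)
    push Not at this
    simpa [TightAt] using this (δ / 2) (by positivity)
  refine ⟨r, ⟨hr0, by linarith⟩, ?_⟩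
  have hbd' : IsBounded (γ '' (closedBall t r ∩ I)) := hbd.subset (image_mono inter_subset_right)
  calc ediam (γ '' (closedBall t r ∩ I)) ^ (1 / α)
      ≤ ENNReal.ofReal ((ε : ℝ) ^ α * (2 * r) ^ α) ^ (1 / α) := by
        gcongr
        rw [← ENNReal.ofReal_toReal hbd'.ediam_ne_top, Real.closedBall_eq_Icc]
        exact ENNReal.ofReal_le_ofReal hsmall.le
    _ = ENNReal.ofReal (ε * (2 * r)) := by
        rw [ENNReal.ofReal_rpow_of_nonneg (by positivity) (by positivity),
          ← Real.mul_rpow (by positivity) (by positivity), one_div,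
          Real.rpow_rpow_inv (by positivity) hα.ne']
    _ = ε * volume (closedBall t r) := by
        rw [Real.volume_closedBall, ENNReal.ofReal_mul (NNReal.coe_nonneg _),
          ENNReal.ofReal_coe_nnreal]

theorem image_of_nontight_points_null_general
    (d : ℕ) (α H : ℝ) (hα0 : 0 < α)
    (a b : ℝ) (γ : ℝ → Euc d)
    (hHol : ∀ t ∈ Icc a b, ∀ s ∈ Icc a b, dist (γ t) (γ s) ≤ H * |t - s| ^ α) :
    μH[1/α] (γ '' {t ∈ Icc a b | ∀ η : ℝ, 0 < η →
      ¬ ∃ R : ℝ, 0 < R ∧ TightAt d γ (Icc a b) α η R t}) = 0 := by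
  set A := {t ∈ Icc a b | ∀ η : ℝ, 0 < η → ¬ ∃ R : ℝ, 0 < R ∧ TightAt d γ (Icc a b) α η R t}
  have hAI : A ⊆ Icc a b := sep_subset _ _
  have hγ : HolderOnWith H.toNNReal α.toNNReal γ (Icc a b) :=
    holderOnWith_of_dist_le hα0.le fun t ht s hs => by
      simpa only [Real.dist_eq] using hHol t ht s hs
  have hα : 0 < α.toNNReal := Real.toNNReal_pos.2 hα0
  have hbd : IsBounded (γ '' Icc a b) :=
    (isCompact_Icc.image_of_continuousOn (hγ.continuousOn hα)).isBounded
  obtain ⟨Z, hZ, hAZ⟩ := exists_measure_eq_zero_hausdorffMeasure_image_diff_eq_zero volume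
    (one_div_pos.2 hα0) ((isBounded_Icc a b).subset hAI) fun ε hε t ht δ hδ =>
      let ⟨r, hr, hle⟩ := exists_ediam_image_rpow_le_of_not_tightAt hα0 hbd ht.2 hε hδ
      ⟨r, hr, le_trans (by gcongr) hle⟩
  have hAZ' : μH[1/α] (γ '' (A ∩ Z)) = 0 := by
    simpa only [Real.coe_toNNReal _ hα0.le] using
      (hγ.mono (inter_subset_left.trans hAI)).hausdorffMeasure_image_eq_zero hα
        (measure_mono_null inter_subset_right hZ)
  rw [← sdiff_union_inter A Z, image_union]
  exact measure_union_null hAZ hAZ'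

/-- The image of the set of points where an `(H,α)`-Hölder curve is
tight for no `η > 0` is `H^{1/α}`-null. -/
theorem image_of_nontight_points_null
    (d : ℕ) (α H : ℝ) (hα0 : 0 < α) (hα1 : α ≤ 1) (hH : 0 ≤ H)
    (a b : ℝ) (hab : a ≤ b) (γ : ℝ → Euc d)
    (hHol : ∀ t ∈ Icc a b, ∀ s ∈ Icc a b, dist (γ t) (γ s) ≤ H * |t - s| ^ α) :
    μH[1/α] (γ '' {t ∈ Icc a b | ∀ η : ℝ, 0 < η →
      ¬ ∃ R : ℝ, 0 < R ∧ TightAt d γ (Icc a b) α η R t}) = 0 :=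
  image_of_nontight_points_null_general d α H hα0 a b γ hHol
end
end
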